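/- arXiv:1207.3861 — 14 statements merged into one kernel-verified Lean document; each statement's English description precedes it below -/
import Mathlib

section
/- Let f : [a,b] → ℝ be differentiable on (a,b) with bounded derivative, and set ‖f'‖_∞ = sup_{t∈(a,b)} |f'(t)| < ∞. Then for all x ∈ [a,b], |f(x) − (1/(b−a))∫_a^b f(t) dt| ≤ [1/4 + (x − (a+b)/2)²/(b−a)²] (b−a) ‖f'‖_∞. -/
open Set

/-- Ostrowski's inequality for differentiable functions with bounded derivative. -/
theorem ostrowski_inequality (a b : ℝ) (hab : a < b) (f f' : ℝ → ℝ)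
    (hc : ContinuousOn f (Icc a b))
    (hd : ∀ t ∈ Ioo a b, HasDerivAt f (f' t) t)
    (hbdd : BddAbove ((fun t => |f' t|) '' Ioo a b)) :
    ∀ x ∈ Icc a b,
      |f x - (1 / (b - a)) * ∫ t in a..b, f t| ≤
        (1 / 4 + (x - (a + b) / 2) ^ 2 / (b - a) ^ 2) * (b - a) *
          sSup ((fun t => |f' t|) '' Ioo a b) := by
  set M := sSup ((fun t => |f' t|) '' Ioo a b) with hM
  have hne : ((fun t => |f' t|) '' Ioo a b).Nonempty :=
    (nonempty_Ioo.2 hab).image _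
  have hMnn : 0 ≤ M := by
    obtain ⟨t, ht⟩ := nonempty_Ioo.2 hab
    exact le_trans (abs_nonneg (f' t)) (le_csSup hbdd ⟨t, ht, rfl⟩)
  have hM' : ∀ t ∈ Ioo a b, |f' t| ≤ M := fun t ht => le_csSup hbdd ⟨t, ht, rfl⟩
  -- Lipschitz bound
  have hlip : ∀ x ∈ Icc a b, ∀ y ∈ Icc a b, |f x - f y| ≤ M * |x - y| := by
    have key : ∀ x ∈ Icc a b, ∀ y ∈ Icc a b, x < y → |f y - f x| ≤ M * |y - x| := by
      intro x hx y hy hxy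
      obtain ⟨c, hc', hderiv⟩ := exists_hasDerivAt_eq_slope f f' hxy
        (hc.mono (Icc_subset_Icc hx.1 hy.2))
        (fun t ht => hd t ⟨lt_of_le_of_lt hx.1 ht.1, lt_of_lt_of_le ht.2 hy.2⟩)
      have : f y - f x = f' c * (y - x) := by
        rw [hderiv, div_mul_cancel₀ _ (sub_ne_zero.2 hxy.ne')]
      rw [this, abs_mul]
      exact mul_le_mul_of_nonneg_right
        (hM' c ⟨lt_of_le_of_lt hx.1 hc'.1, lt_of_lt_of_le hc'.2 hy.2⟩) (abs_nonneg _)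
    intro x hx y hy
    rcases lt_trichotomy x y with h | h | h
    · rw [abs_sub_comm, abs_sub_comm x y]; exact key x hx y hy h
    · simp [h]
    · exact key y hy x hx h
  intro x hx
  have hba : (0:ℝ) < b - a := sub_pos.2 hab
  -- integrability
  have hfint : IntervalIntegrable f MeasureTheory.volume a b :=
    hc.intervalIntegrable_of_Icc hab.le
  have hgint : IntervalIntegrable (fun t => M * |x - t|) MeasureTheory.volume a b :=
    (continuous_const.mul (continuous_const.sub continuous_id).abs).intervalIntegrable a b
  have hcint : IntervalIntegrable (fun _ => f x) MeasureTheory.volume a b :=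
    intervalIntegrable_const
  have habs : IntervalIntegrable (fun t => |f x - f t|) MeasureTheory.volume a b :=
    (hcint.sub hfint).abs
  -- rewrite LHS
  have key : f x - (1 / (b - a)) * ∫ t in a..b, f t
      = (1 / (b - a)) * ∫ t in a..b, (f x - f t) := by
    rw [intervalIntegral.integral_sub hcint hfint, intervalIntegral.integral_const]
    field_simp
    ring
  rw [key, abs_mul, abs_of_pos (by positivity : (0:ℝ) < 1/(b-a))]
  have step1 : |∫ t in a..b, (f x - f t)| ≤ ∫ t in a..b, |f x - f t| :=
    intervalIntegral.abs_integral_le_integral_abs hab.le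
  have step2 : (∫ t in a..b, |f x - f t|) ≤ ∫ t in a..b, M * |x - t| := by
    apply intervalIntegral.integral_mono_on hab.le habs hgint
    intro t ht
    exact hlip x hx t ht
  have step3 : (∫ t in a..b, M * |x - t|) = M * ((x - a)^2 + (b - x)^2) / 2 := by
    rw [intervalIntegral.integral_const_mul]
    have hsplit : (∫ t in a..b, |x - t|)
        = (∫ t in a..x, |x - t|) + ∫ t in x..b, |x - t| := by
      rw [intervalIntegral.integral_add_adjacent_intervals]
      · exact (continuous_const.sub continuous_id).abs.intervalIntegrable a x
      · exact (continuous_const.sub continuous_id).abs.intervalIntegrable x b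
    have h1 : (∫ t in a..x, |x - t|) = ∫ t in a..x, (x - t) := by
      apply intervalIntegral.integral_congr
      intro t ht
      rw [uIcc_of_le hx.1] at ht
      exact abs_of_nonneg (by linarith [ht.2])
    have h2 : (∫ t in x..b, |x - t|) = ∫ t in x..b, (t - x) := by
      apply intervalIntegral.integral_congr
      intro t ht
      rw [uIcc_of_le hx.2] at ht
      show |x - t| = t - x
      rw [abs_sub_comm]
      exact abs_of_nonneg (by linarith [ht.1])
    have e1 : (∫ t in a..x, (x - t)) = (x - a)^2/2 := by
      rw [intervalIntegral.integral_sub intervalIntegrable_const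
        (intervalIntegral.intervalIntegrable_id), intervalIntegral.integral_const,
        integral_id]
      simp only [smul_eq_mul]
      ring
    have e2 : (∫ t in x..b, (t - x)) = (b - x)^2/2 := by
      rw [intervalIntegral.integral_sub intervalIntegral.intervalIntegrable_id
        intervalIntegrable_const, intervalIntegral.integral_const, integral_id]
      simp only [smul_eq_mul]
      ring
    rw [hsplit, h1, h2, e1, e2]
    ring
  calc 1/(b-a) * |∫ t in a..b, (f x - f t)|
      ≤ 1/(b-a) * (M * ((x - a)^2 + (b - x)^2) / 2) := by
        apply mul_le_mul_of_nonneg_left _ (by positivity)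
        rw [← step3]; exact step1.trans step2
    _ = (1 / 4 + (x - (a + b) / 2) ^ 2 / (b - a) ^ 2) * (b - a) * M := by
        field_simp
        ring
end

section
/- Let f : [a,b] → ℝ be of bounded variation on [a,b]. Then for all x ∈ [a,b], |f(x) − (1/(b−a))∫_a^b f(t) dt| ≤ [1/2 + |x − (a+b)/2|/(b−a)] · V_a^b(f), where V_a^b(f) denotes the total variation of f on [a,b]. -/
open Set

/-- Total variation of `f` on the interval `[c, d]`. -/
noncomputable def V (f : ℝ → ℝ) (c d : ℝ) : ℝ := (eVariationOn f (Set.Icc c d)).toReal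

/-- Ostrowski's inequality for functions of bounded variation. -/
theorem ostrowski_bv (a b : ℝ) (hab : a < b) (f : ℝ → ℝ)
    (hf : BoundedVariationOn f (Icc a b)) :
    ∀ x ∈ Icc a b,
      |f x - (1 / (b - a)) * ∫ t in a..b, f t| ≤
        (1 / 2 + |x - (a + b) / 2| / (b - a)) * V f a b := by
  intro x hx
  obtain ⟨hax, hxb⟩ := hx
  have hab' : a ≤ b := hab.le
  have hba : (0:ℝ) < b - a := by linarith
  -- integrability of f on [a,b]
  obtain ⟨p, q, hp, hq, hpq⟩ := hf.locallyBoundedVariationOn.exists_monotoneOn_sub_monotoneOn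
  have hfi : IntervalIntegrable f MeasureTheory.volume a b := by
    have hp' : IntervalIntegrable p MeasureTheory.volume a b :=
      (hp.mono (by rw [uIcc_of_le hab'])).intervalIntegrable
    have hq' : IntervalIntegrable q MeasureTheory.volume a b :=
      (hq.mono (by rw [uIcc_of_le hab'])).intervalIntegrable
    rw [hpq]; exact hp'.sub hq'
  have hfi1 : IntervalIntegrable f MeasureTheory.volume a x :=
    hfi.mono_set (by rw [uIcc_of_le hax, uIcc_of_le hab']; exact Icc_subset_Icc le_rfl hxb)
  have hfi2 : IntervalIntegrable f MeasureTheory.volume x b :=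
    hfi.mono_set (by rw [uIcc_of_le hxb, uIcc_of_le hab']; exact Icc_subset_Icc hax le_rfl)
  have hgi1 : IntervalIntegrable (fun t => f x - f t) MeasureTheory.volume a x :=
    (intervalIntegrable_const).sub hfi1
  have hgi2 : IntervalIntegrable (fun t => f x - f t) MeasureTheory.volume x b :=
    (intervalIntegrable_const).sub hfi2
  -- variation finiteness and additivity
  have hsub1 : eVariationOn f (Icc a x) ≤ eVariationOn f (Icc a b) :=
    eVariationOn.mono f (Icc_subset_Icc le_rfl hxb)
  have hsub2 : eVariationOn f (Icc x b) ≤ eVariationOn f (Icc a b) :=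
    eVariationOn.mono f (Icc_subset_Icc hax le_rfl)
  have hV1 : eVariationOn f (Icc a x) ≠ ⊤ := fun h => hf (le_antisymm le_top (h ▸ hsub1) ▸ rfl)
  have hV2 : eVariationOn f (Icc x b) ≠ ⊤ := fun h => hf (le_antisymm le_top (h ▸ hsub2) ▸ rfl)
  have hadd : V f a x + V f x b = V f a b := by
    have := eVariationOn.Icc_add_Icc f (s := univ) hax hxb (mem_univ x)
    simp only [univ_inter] at this
    rw [V, V, V, ← ENNReal.toReal_add hV1 hV2, this]
  have hV1nn : 0 ≤ V f a x := ENNReal.toReal_nonneg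
  have hV2nn : 0 ≤ V f x b := ENNReal.toReal_nonneg
  -- pointwise bounds
  have key1 : ∀ t ∈ Icc a x, |f x - f t| ≤ V f a x := by
    intro t ht
    have h := eVariationOn.edist_le f (s := Icc a x) (x := x) (y := t) ⟨hax, le_rfl⟩ ht
    rw [edist_dist] at h
    have := ENNReal.toReal_mono hV1 h
    rwa [ENNReal.toReal_ofReal dist_nonneg, Real.dist_eq] at this
  have key2 : ∀ t ∈ Icc x b, |f x - f t| ≤ V f x b := by
    intro t ht
    have h := eVariationOn.edist_le f (s := Icc x b) (x := x) (y := t) ⟨le_rfl, hxb⟩ ht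
    rw [edist_dist] at h
    have := ENNReal.toReal_mono hV2 h
    rwa [ENNReal.toReal_ofReal dist_nonneg, Real.dist_eq] at this
  -- bound the two integrals
  have hI1 : |∫ t in a..x, (f x - f t)| ≤ V f a x * (x - a) := by
    have h := intervalIntegral.norm_integral_le_of_norm_le_const
      (f := fun t => f x - f t) (a := a) (b := x) (C := V f a x) ?_
    · rw [Real.norm_eq_abs] at h
      calc |∫ t in a..x, (f x - f t)| ≤ V f a x * |x - a| := h
        _ = V f a x * (x - a) := by rw [abs_of_nonneg (by linarith : (0:ℝ) ≤ x - a)]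
    · intro t ht
      rw [uIoc_of_le hax] at ht
      exact key1 t ⟨ht.1.le, ht.2⟩
  have hI2 : |∫ t in x..b, (f x - f t)| ≤ V f x b * (b - x) := by
    have h := intervalIntegral.norm_integral_le_of_norm_le_const
      (f := fun t => f x - f t) (a := x) (b := b) (C := V f x b) ?_
    · rw [Real.norm_eq_abs] at h
      calc |∫ t in x..b, (f x - f t)| ≤ V f x b * |b - x| := h
        _ = V f x b * (b - x) := by rw [abs_of_nonneg (by linarith : (0:ℝ) ≤ b - x)]
    · intro t ht
      rw [uIoc_of_le hxb] at ht
      exact key2 t ⟨ht.1.le, ht.2⟩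
  -- rewrite the LHS
  have hrw : f x - (1 / (b - a)) * ∫ t in a..b, f t
      = (1 / (b - a)) * ∫ t in a..b, (f x - f t) := by
    rw [intervalIntegral.integral_sub intervalIntegrable_const hfi,
      intervalIntegral.integral_const]
    field_simp
    ring
  rw [hrw, abs_mul, abs_of_nonneg (by positivity : (0:ℝ) ≤ 1 / (b - a))]
  have hsplit : (∫ t in a..b, (f x - f t))
      = (∫ t in a..x, (f x - f t)) + ∫ t in x..b, (f x - f t) :=
    (intervalIntegral.integral_add_adjacent_intervals hgi1 hgi2).symm
  have hM : |∫ t in a..b, (f x - f t)|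
      ≤ max (x - a) (b - x) * V f a b := by
    rw [hsplit]
    calc |(∫ t in a..x, (f x - f t)) + ∫ t in x..b, (f x - f t)|
        ≤ |∫ t in a..x, (f x - f t)| + |∫ t in x..b, (f x - f t)| := abs_add_le _ _
      _ ≤ V f a x * (x - a) + V f x b * (b - x) := add_le_add hI1 hI2
      _ ≤ V f a x * max (x - a) (b - x) + V f x b * max (x - a) (b - x) := by
          gcongr
          · exact le_max_left _ _
          · exact le_max_right _ _
      _ = max (x - a) (b - x) * V f a b := by rw [← hadd]; ring
  calc (1 / (b - a)) * |∫ t in a..b, (f x - f t)|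
      ≤ (1 / (b - a)) * (max (x - a) (b - x) * V f a b) := by
        apply mul_le_mul_of_nonneg_left hM (by positivity)
    _ = (1 / 2 + |x - (a + b) / 2| / (b - a)) * V f a b := by
        have hmax : max (x - a) (b - x) = (b - a) / 2 + |x - (a + b) / 2| := by
          rcases le_total x ((a + b) / 2) with h | h
          · rw [abs_of_nonpos (by linarith), max_eq_right (by linarith)]; ring
          · rw [abs_of_nonneg (by linarith), max_eq_left (by linarith)]; ring
        set c := |x - (a + b) / 2| with hc
        have hkey : (1 / (b - a)) * ((b - a) / 2 + c) = 1 / 2 + c / (b - a) := by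
          field_simp
        rw [hmax, ← mul_assoc, hkey]
end

section
/- Let f : [a,b] → ℝ be of bounded variation on [a,b]. Then for all x ∈ [a,(a+b)/2], |(f(x)+f(a+b−x))/2 − (1/(b−a))∫_a^b f(t) dt| ≤ (1/(b−a)) [ (x−a)·V_a^x(f) + ((a+b)/2 − x)·V_x^{a+b−x}(f) + (x−a)·V_{a+b−x}^b(f) ]. -/
open Set

private lemma dist_le_V {f : ℝ → ℝ} {c d u v : ℝ}
    (hfin : eVariationOn f (Set.Icc c d) ≠ ⊤)
    (hu : u ∈ Set.Icc c d) (hv : v ∈ Set.Icc c d) :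
    |f u - f v| ≤ V f c d := by
  have h := eVariationOn.edist_le f hu hv
  have := ENNReal.toReal_mono hfin h
  rwa [← dist_edist, Real.dist_eq] at this

/-- Companion of Ostrowski's inequality for functions of bounded variation: first bound. -/
theorem companion_ostrowski_bv (a b : ℝ) (hab : a < b) (f : ℝ → ℝ)
    (hf : BoundedVariationOn f (Icc a b)) :
    ∀ x ∈ Icc a ((a + b) / 2),
      |(f x + f (a + b - x)) / 2 - (1 / (b - a)) * ∫ t in a..b, f t| ≤
        (1 / (b - a)) * ((x - a) * V f a x + ((a + b) / 2 - x) * V f x (a + b - x)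
          + (x - a) * V f (a + b - x) b) := by
  intro x hx
  obtain ⟨hax, hxm⟩ := hx
  set m : ℝ := (a + b) / 2 with hm
  set y : ℝ := a + b - x with hy
  have hmy : m ≤ y := by simp [hm, hy]; linarith
  have hyb : y ≤ b := by simp [hy]; linarith
  have hxy : x ≤ y := le_trans hxm hmy
  have hxmem : x ∈ Icc a b := ⟨hax, le_trans hxy hyb⟩
  have hymem : y ∈ Icc a b := ⟨le_trans hax hxy, hyb⟩
  have hba : (0:ℝ) < b - a := by linarith
  -- finiteness of variations on subintervals
  have hfin : ∀ c d : ℝ, a ≤ c → d ≤ b → eVariationOn f (Icc c d) ≠ ⊤ := fun c d hc hd =>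
    ne_top_of_le_ne_top hf (eVariationOn.mono f (Icc_subset_Icc hc hd))
  -- integrability
  obtain ⟨p, q, hp, hq, hpq⟩ :=
    hf.locallyBoundedVariationOn.exists_monotoneOn_sub_monotoneOn
  have hIab : IntervalIntegrable f MeasureTheory.volume a b := by
    have hp' : MonotoneOn p (Set.uIcc a b) := by rwa [Set.uIcc_of_le hab.le]
    have hq' : MonotoneOn q (Set.uIcc a b) := by rwa [Set.uIcc_of_le hab.le]
    have h := (hp'.intervalIntegrable (μ := MeasureTheory.volume)).sub
      (hq'.intervalIntegrable (μ := MeasureTheory.volume))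
    have hfe : f = fun t => p t - q t := funext fun t => by rw [hpq]; rfl
    rw [hfe]
    exact h
  have hI : ∀ c d : ℝ, a ≤ c → c ≤ d → d ≤ b → IntervalIntegrable f MeasureTheory.volume c d := by
    intro c d h1 h2 h3
    apply hIab.mono_set
    rw [Set.uIcc_of_le h2, Set.uIcc_of_le hab.le]
    exact Icc_subset_Icc h1 h3
  have hIax := hI a x le_rfl hax (le_trans hxy hyb)
  have hIxm := hI x m hax hxm (le_trans hmy hyb)
  have hImy := hI m y (by simp [hm]; linarith) hmy hyb
  have hIyb := hI y b (le_trans hax hxy) hyb le_rfl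
  -- the composed function on the middle interval
  have hcomp : IntervalIntegrable (fun t => f (a + b - t)) MeasureTheory.volume x m := by
    have := hImy.comp_sub_left (a + b)
    have h1 : a + b - m = m := by simp [hm]; ring
    have h2 : a + b - y = x := by simp [hy]
    rw [h1, h2] at this
    exact this.symm
  -- the three error integrals
  set E1 : ℝ := ∫ t in a..x, (f x - f t) with hE1
  set E2 : ℝ := ∫ t in x..m, ((f x - f t) + (f y - f (a + b - t))) with hE2
  set E3 : ℝ := ∫ t in y..b, (f y - f t) with hE3
  -- identity: E1 + E2 + E3 = (f x + f y)/2 * (b - a) - ∫ f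
  have hsplit : (∫ t in a..b, f t) =
      (∫ t in a..x, f t) + (∫ t in x..m, f t) + (∫ t in m..y, f t) + (∫ t in y..b, f t) := by
    have h1 := intervalIntegral.integral_add_adjacent_intervals hIxm hImy
    have h2 := intervalIntegral.integral_add_adjacent_intervals (hIxm.trans hImy) hIyb
    have h3 := intervalIntegral.integral_add_adjacent_intervals hIax
      ((hIxm.trans hImy).trans hIyb)
    linarith
  have hE1' : E1 = (x - a) * f x - ∫ t in a..x, f t := by
    rw [hE1, intervalIntegral.integral_sub intervalIntegrable_const hIax,
      intervalIntegral.integral_const, smul_eq_mul]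
  have hE3' : E3 = (b - y) * f y - ∫ t in y..b, f t := by
    rw [hE3, intervalIntegral.integral_sub intervalIntegrable_const hIyb,
      intervalIntegral.integral_const, smul_eq_mul]
  have hsubst : (∫ t in x..m, f (a + b - t)) = ∫ t in m..y, f t := by
    have := intervalIntegral.integral_comp_sub_left f (a + b) (a := x) (b := m)
    have h1 : a + b - m = m := by simp [hm]; ring
    have h2 : a + b - x = y := rfl
    rwa [h1, h2] at this
  have hE2' : E2 = (m - x) * (f x + f y) - (∫ t in x..m, f t) - ∫ t in m..y, f t := by
    rw [hE2, intervalIntegral.integral_add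
        (intervalIntegrable_const.sub hIxm) (intervalIntegrable_const.sub hcomp),
      intervalIntegral.integral_sub intervalIntegrable_const hIxm,
      intervalIntegral.integral_sub intervalIntegrable_const hcomp,
      intervalIntegral.integral_const, intervalIntegral.integral_const, hsubst]
    simp only [smul_eq_mul]
    ring
  have hsum : E1 + E2 + E3 = (f x + f y) / 2 * (b - a) - ∫ t in a..b, f t := by
    rw [hE1', hE2', hE3', hsplit]
    have h : b - y = x - a := by simp only [hy]; ring
    rw [h]
    have hm' : m = (a + b) / 2 := rfl
    rw [hm']
    ring
  -- bounds on the three integrals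
  have hb1 : |E1| ≤ (x - a) * V f a x := by
    have := intervalIntegral.norm_integral_le_of_norm_le_const
      (C := V f a x) (f := fun t => f x - f t) (a := a) (b := x) ?_
    · rw [← Real.norm_eq_abs, hE1]
      calc ‖∫ t in a..x, (f x - f t)‖ ≤ V f a x * |x - a| := this
        _ = (x - a) * V f a x := by rw [abs_of_nonneg (by linarith)]; ring
    · intro t ht
      rw [Set.uIoc_of_le hax] at ht
      exact dist_le_V (hfin a x le_rfl (le_trans hxy hyb))
        ⟨hax, le_rfl⟩ ⟨ht.1.le, ht.2⟩
  have hb3 : |E3| ≤ (x - a) * V f y b := by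
    have := intervalIntegral.norm_integral_le_of_norm_le_const
      (C := V f y b) (f := fun t => f y - f t) (a := y) (b := b) ?_
    · rw [← Real.norm_eq_abs, hE3]
      have hby : |b - y| = x - a := by
        rw [abs_of_nonneg (by linarith)]; simp [hy]; ring
      calc ‖∫ t in y..b, (f y - f t)‖ ≤ V f y b * |b - y| := this
        _ = (x - a) * V f y b := by rw [hby]; ring
    · intro t ht
      rw [Set.uIoc_of_le hyb] at ht
      exact dist_le_V (hfin y b (le_trans hax hxy) le_rfl)
        ⟨le_rfl, hyb⟩ ⟨ht.1.le, ht.2⟩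
  have hb2 : |E2| ≤ (m - x) * V f x y := by
    have := intervalIntegral.norm_integral_le_of_norm_le_const
      (C := V f x y) (f := fun t => (f x - f t) + (f y - f (a + b - t))) (a := x) (b := m) ?_
    · rw [← Real.norm_eq_abs, hE2]
      calc ‖∫ t in x..m, ((f x - f t) + (f y - f (a + b - t)))‖
          ≤ V f x y * |m - x| := this
        _ = (m - x) * V f x y := by rw [abs_of_nonneg (by linarith)]; ring
    · intro t ht
      rw [Set.uIoc_of_le hxm] at ht
      obtain ⟨ht1, ht2⟩ := ht
      have hty : t ≤ a + b - t := by simp [hm] at ht2; linarith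
      have htyy : a + b - t ≤ y := by simp [hy]; linarith
      -- eVariationOn additivity
      have hadd1 : eVariationOn f (Icc x t) + eVariationOn f (Icc t y)
          = eVariationOn f (Icc x y) := by
        have := eVariationOn.Icc_add_Icc f (s := Set.univ) ht1.le (le_trans hty htyy)
          (Set.mem_univ t)
        simpa using this
      have hadd2 : eVariationOn f (Icc t (a+b-t)) + eVariationOn f (Icc (a+b-t) y)
          = eVariationOn f (Icc t y) := by
        have := eVariationOn.Icc_add_Icc f (s := Set.univ) hty htyy (Set.mem_univ (a+b-t))
        simpa using this
      have key : edist (f x) (f t) + edist (f y) (f (a + b - t))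
          ≤ eVariationOn f (Icc x y) := by
        calc edist (f x) (f t) + edist (f y) (f (a + b - t))
            ≤ eVariationOn f (Icc x t) + eVariationOn f (Icc (a+b-t) y) := by
              gcongr
              · exact eVariationOn.edist_le f ⟨le_rfl, ht1.le⟩ ⟨ht1.le, le_rfl⟩
              · exact (edist_comm (f y) (f (a+b-t))) ▸
                  eVariationOn.edist_le f ⟨le_rfl, htyy⟩ ⟨htyy, le_rfl⟩
          _ ≤ eVariationOn f (Icc x t) +
              (eVariationOn f (Icc t (a+b-t)) + eVariationOn f (Icc (a+b-t) y)) := by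
              gcongr
              exact le_add_self
          _ = eVariationOn f (Icc x y) := by rw [hadd2, hadd1]
      have hfinxy := hfin x y hax hyb
      have h1 : |f x - f t| + |f y - f (a + b - t)|
          = (edist (f x) (f t) + edist (f y) (f (a + b - t))).toReal := by
        rw [ENNReal.toReal_add (edist_ne_top _ _) (edist_ne_top _ _),
          ← dist_edist, ← dist_edist, Real.dist_eq, Real.dist_eq]
      calc ‖(f x - f t) + (f y - f (a + b - t))‖
          ≤ |f x - f t| + |f y - f (a + b - t)| := norm_add_le _ _
        _ = (edist (f x) (f t) + edist (f y) (f (a + b - t))).toReal := h1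
        _ ≤ V f x y := ENNReal.toReal_mono hfinxy key
  -- assemble
  have habs : |E1 + E2 + E3| ≤
      (x - a) * V f a x + (m - x) * V f x y + (x - a) * V f y b := by
    calc |E1 + E2 + E3| ≤ |E1| + |E2| + |E3| := abs_add_three _ _ _
      _ ≤ _ := by gcongr
  have hexpr : (f x + f y) / 2 - (1 / (b - a)) * ∫ t in a..b, f t
      = (1 / (b - a)) * (E1 + E2 + E3) := by
    rw [hsum]; field_simp
  calc |(f x + f y) / 2 - (1 / (b - a)) * ∫ t in a..b, f t|
      = (1 / (b - a)) * |E1 + E2 + E3| := by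
        rw [hexpr, abs_mul, abs_of_pos (by positivity : (0:ℝ) < 1 / (b - a))]
    _ ≤ (1 / (b - a)) * ((x - a) * V f a x + (m - x) * V f x y + (x - a) * V f y b) := by
        apply mul_le_mul_of_nonneg_left habs (by positivity)
end

section
/- Let f : [a,b] → ℝ be of bounded variation on [a,b]. Then for all x ∈ [a,(a+b)/2], (1/(b−a)) [ (x−a)·V_a^x(f) + ((a+b)/2 − x)·V_x^{a+b−x}(f) + (x−a)·V_{a+b−x}^b(f) ] ≤ [ 1/4 + |x − (3a+b)/4|/(b−a) ] · V_a^b(f). -/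
open Set

theorem V_split (f : ℝ → ℝ) {a b c : ℝ} (hab : a ≤ b) (hbc : b ≤ c)
    (hf : BoundedVariationOn f (Icc a c)) :
    V f a c = V f a b + V f b c := by
  have h := eVariationOn.Icc_add_Icc f (s := Icc a c) hab hbc ⟨hab, hbc⟩
  have e1 : Icc a c ∩ Icc a b = Icc a b := by
    rw [Set.Icc_inter_Icc]; simp [max_self, min_eq_right hbc]
  have e2 : Icc a c ∩ Icc b c = Icc b c := by
    rw [Set.Icc_inter_Icc]; simp [min_self, max_eq_right hab]
  have e3 : Icc a c ∩ Icc a c = Icc a c := Set.inter_self _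
  rw [e1, e2, e3] at h
  have f1 : eVariationOn f (Icc a b) ≠ ⊤ :=
    fun ht => hf (top_le_iff.mp (ht ▸ eVariationOn.mono f (Icc_subset_Icc le_rfl hbc)))
  have f2 : eVariationOn f (Icc b c) ≠ ⊤ :=
    fun ht => hf (top_le_iff.mp (ht ▸ eVariationOn.mono f (Icc_subset_Icc hab le_rfl)))
  unfold V
  rw [← h, ENNReal.toReal_add f1 f2]

/-- Companion of Ostrowski's inequality: second bound. -/
theorem companion_ostrowski_bv_second_bound (a b : ℝ) (hab : a < b) (f : ℝ → ℝ)
    (hf : BoundedVariationOn f (Icc a b)) :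
    ∀ x ∈ Icc a ((a + b) / 2),
      (1 / (b - a)) * ((x - a) * V f a x + ((a + b) / 2 - x) * V f x (a + b - x)
          + (x - a) * V f (a + b - x) b) ≤
        (1 / 4 + |x - (3 * a + b) / 4| / (b - a)) * V f a b := by
  intro x hx
  obtain ⟨hax, hxm⟩ := hx
  have h1 : x ≤ a + b - x := by linarith
  have h2 : a + b - x ≤ b := by linarith
  have hxb : x ≤ b := by linarith
  have hay : a ≤ a + b - x := by linarith
  have hf' : BoundedVariationOn f (Icc a (a + b - x)) :=
    hf.mono (Icc_subset_Icc le_rfl h2)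
  have s1 : V f a b = V f a (a + b - x) + V f (a + b - x) b := V_split f hay h2 hf
  have s2 : V f a (a + b - x) = V f a x + V f x (a + b - x) := V_split f hax h1 hf'
  have n1 : 0 ≤ V f a x := ENNReal.toReal_nonneg
  have n2 : 0 ≤ V f x (a + b - x) := ENNReal.toReal_nonneg
  have n3 : 0 ≤ V f (a + b - x) b := ENNReal.toReal_nonneg
  have hba : 0 < b - a := by linarith
  rw [s1, s2]
  set t := |x - (3 * a + b) / 4| with ht
  have t1 : x - (3 * a + b) / 4 ≤ t := le_abs_self _
  have t2 : -(x - (3 * a + b) / 4) ≤ t := neg_le_abs _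
  have hu : x - a ≤ (b - a) / 4 + t := by linarith
  have hm : (a + b) / 2 - x ≤ (b - a) / 4 + t := by linarith
  have heq : 1 / 4 + t / (b - a) = ((b - a) / 4 + t) / (b - a) := by
    field_simp
  rw [heq, one_div_mul_eq_div, div_mul_eq_mul_div, div_le_div_iff₀ hba hba]
  nlinarith [mul_nonneg n1 (sub_nonneg.mpr hax), mul_nonneg n2 (sub_nonneg.mpr hax),
    mul_nonneg n3 (sub_nonneg.mpr hax), mul_le_mul_of_nonneg_left hu n1,
    mul_le_mul_of_nonneg_left hm n2, mul_le_mul_of_nonneg_left hu n3]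
end

section
/- Let f : [a,b] → ℝ be of bounded variation on [a,b]. Then |( f((3a+b)/4) + f((a+3b)/4) )/2 − (1/(b−a))∫_a^b f(t) dt| ≤ (1/4) · V_a^b(f). -/
open Set

/-- Trapezoid type inequality for functions of bounded variation. -/
theorem trapezoid_type_bv (a b : ℝ) (hab : a < b) (f : ℝ → ℝ)
    (hf : BoundedVariationOn f (Icc a b)) :
    |(f ((3 * a + b) / 4) + f ((a + 3 * b) / 4)) / 2 - (1 / (b - a)) * ∫ t in a..b, f t| ≤
      (1 / 4) * V f a b := by
  have hab' : a ≤ b := hab.le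
  set x₁ : ℝ := (3 * a + b) / 4 with hx₁
  set x₂ : ℝ := (a + 3 * b) / 4 with hx₂
  set m : ℝ := (a + b) / 2 with hm
  have hax1 : a ≤ x₁ := by rw [hx₁]; linarith
  have hx1m : x₁ ≤ m := by rw [hx₁, hm]; linarith
  have hmx2 : m ≤ x₂ := by rw [hm, hx₂]; linarith
  have hx2b : x₂ ≤ b := by rw [hx₂]; linarith
  -- pointwise bound by variation
  have key : ∀ c d : ℝ, Icc c d ⊆ Icc a b → ∀ s ∈ Icc c d, ∀ t ∈ Icc c d,
      |f s - f t| ≤ V f c d := by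
    intro c d hsub s hs t ht
    have h1 : edist (f s) (f t) ≤ eVariationOn f (Icc c d) :=
      eVariationOn.edist_le f hs ht
    have hfin : eVariationOn f (Icc c d) ≠ ⊤ :=
      ne_top_of_le_ne_top hf (eVariationOn.mono f hsub)
    have := ENNReal.toReal_mono hfin h1
    rwa [edist_dist, ENNReal.toReal_ofReal dist_nonneg, Real.dist_eq] at this
  -- integral bound
  have ibound : ∀ c d : ℝ, c ≤ d → Icc c d ⊆ Icc a b → ∀ x ∈ Icc c d,
      |∫ t in c..d, (f x - f t)| ≤ V f c d * (d - c) := by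
    intro c d hcd hsub x hx
    have h := intervalIntegral.norm_integral_le_of_norm_le_const
      (C := V f c d) (f := fun t => f x - f t) (a := c) (b := d) ?_
    · have h2 : |d - c| = d - c := abs_of_nonneg (by linarith)
      rwa [Real.norm_eq_abs, h2] at h
    · intro t ht
      rw [uIoc_of_le hcd] at ht
      exact key c d hsub x hx t (Ioc_subset_Icc_self ht)
  -- integrability
  obtain ⟨p, q, hp, hq, hpq⟩ :=
    hf.locallyBoundedVariationOn.exists_monotoneOn_sub_monotoneOn
  have hint : ∀ c d : ℝ, c ≤ d → Icc c d ⊆ Icc a b → IntervalIntegrable f MeasureTheory.volume c d := by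
    intro c d hcd hsub
    have hsub' : Set.uIcc c d ⊆ Icc a b := by rwa [uIcc_of_le hcd]
    rw [hpq]
    exact ((hp.mono hsub').intervalIntegrable).sub ((hq.mono hsub').intervalIntegrable)
  have s1 : Icc a x₁ ⊆ Icc a b := Icc_subset_Icc le_rfl (hx1m.trans (hmx2.trans hx2b))
  have s2 : Icc x₁ m ⊆ Icc a b := Icc_subset_Icc hax1 (hmx2.trans hx2b)
  have s3 : Icc m x₂ ⊆ Icc a b := Icc_subset_Icc (hax1.trans hx1m) hx2b
  have s4 : Icc x₂ b ⊆ Icc a b := Icc_subset_Icc (hax1.trans (hx1m.trans hmx2)) le_rfl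
  -- decomposition of the integral
  have hsplit : (∫ t in a..b, f t) = (∫ t in a..x₁, f t) + (∫ t in x₁..m, f t)
      + (∫ t in m..x₂, f t) + (∫ t in x₂..b, f t) := by
    have e1 := intervalIntegral.integral_add_adjacent_intervals (hint a x₁ hax1 s1)
      ((hint x₁ m hx1m s2).trans (hint m x₂ hmx2 s3) |>.trans (hint x₂ b hx2b s4))
    have e2 := intervalIntegral.integral_add_adjacent_intervals (hint x₁ m hx1m s2)
      ((hint m x₂ hmx2 s3).trans (hint x₂ b hx2b s4))
    have e3 := intervalIntegral.integral_add_adjacent_intervals (hint m x₂ hmx2 s3)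
      (hint x₂ b hx2b s4)
    linarith
  -- the four local integrals
  have A : ∀ c d : ℝ, c ≤ d → Icc c d ⊆ Icc a b → ∀ x : ℝ,
      (∫ t in c..d, (f x - f t)) = (d - c) * f x - ∫ t in c..d, f t := by
    intro c d hcd hsub x
    rw [intervalIntegral.integral_sub intervalIntegrable_const (hint c d hcd hsub),
      intervalIntegral.integral_const, smul_eq_mul]
  -- variation additivity
  have Vadd : ∀ c d e : ℝ, c ≤ d → d ≤ e → Icc c e ⊆ Icc a b →
      V f c d + V f d e = V f c e := by
    intro c d e hcd hde hsub
    have h := eVariationOn.Icc_add_Icc f (s := (univ : Set ℝ)) hcd hde (mem_univ d)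
    simp only [univ_inter] at h
    have h1 : eVariationOn f (Icc c d) ≠ ⊤ := ne_top_of_le_ne_top hf
      (eVariationOn.mono f ((Icc_subset_Icc le_rfl hde).trans hsub))
    have h2 : eVariationOn f (Icc d e) ≠ ⊤ := ne_top_of_le_ne_top hf
      (eVariationOn.mono f ((Icc_subset_Icc hcd le_rfl).trans hsub))
    unfold V
    rw [← h, ENNReal.toReal_add h1 h2]
  have hVnn : ∀ c d : ℝ, 0 ≤ V f c d := fun c d => ENNReal.toReal_nonneg
  -- the main estimate
  set S : ℝ := (∫ t in a..x₁, (f x₁ - f t)) + (∫ t in x₁..m, (f x₁ - f t))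
    + (∫ t in m..x₂, (f x₂ - f t)) + (∫ t in x₂..b, (f x₂ - f t)) with hS
  have hSbound : |S| ≤ ((b - a) / 4) * V f a b := by
    have b1 := ibound a x₁ hax1 s1 x₁ ⟨hax1, le_rfl⟩
    have b2 := ibound x₁ m hx1m s2 x₁ ⟨le_rfl, hx1m⟩
    have b3 := ibound m x₂ hmx2 s3 x₂ ⟨hmx2, le_rfl⟩
    have b4 := ibound x₂ b hx2b s4 x₂ ⟨le_rfl, hx2b⟩
    have l1 : x₁ - a = (b - a) / 4 := by rw [hx₁]; ring
    have l2 : m - x₁ = (b - a) / 4 := by rw [hm, hx₁]; ring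
    have l3 : x₂ - m = (b - a) / 4 := by rw [hx₂, hm]; ring
    have l4 : b - x₂ = (b - a) / 4 := by rw [hx₂]; ring
    rw [l1] at b1; rw [l2] at b2; rw [l3] at b3; rw [l4] at b4
    have hVeq : V f a x₁ + V f x₁ m + V f m x₂ + V f x₂ b = V f a b := by
      rw [Vadd a x₁ m hax1 hx1m (Icc_subset_Icc le_rfl (hmx2.trans hx2b)),
        Vadd a m x₂ (hax1.trans hx1m) hmx2 (Icc_subset_Icc le_rfl hx2b),
        Vadd a x₂ b (hax1.trans (hx1m.trans hmx2)) hx2b Subset.rfl]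
    have habs : |S| ≤ |∫ t in a..x₁, (f x₁ - f t)| + |∫ t in x₁..m, (f x₁ - f t)|
        + |∫ t in m..x₂, (f x₂ - f t)| + |∫ t in x₂..b, (f x₂ - f t)| := by
      rw [hS]
      exact (abs_add_le _ _).trans (add_le_add_left (abs_add_three _ _ _) _)
    have hfin : V f a x₁ * ((b - a) / 4) + V f x₁ m * ((b - a) / 4)
        + V f m x₂ * ((b - a) / 4) + V f x₂ b * ((b - a) / 4)
        = ((b - a) / 4) * V f a b := by rw [← hVeq]; ring
    linarith
  -- rewrite the LHS
  have hEq : (f x₁ + f x₂) / 2 - (1 / (b - a)) * ∫ t in a..b, f t = (1 / (b - a)) * S := by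
    rw [hS, A a x₁ hax1 s1, A x₁ m hx1m s2, A m x₂ hmx2 s3, A x₂ b hx2b s4, hsplit]
    have hba : b - a ≠ 0 := by linarith
    field_simp
    rw [hx₁, hx₂, hm]
    ring
  have hba : b - a ≠ 0 := by linarith
  have h0 : (0:ℝ) ≤ 1 / (b - a) := le_of_lt (div_pos one_pos (by linarith))
  rw [hEq, abs_mul, abs_of_nonneg h0]
  calc 1 / (b - a) * |S| ≤ 1 / (b - a) * (((b - a) / 4) * V f a b) :=
        mul_le_mul_of_nonneg_left hSbound h0
    _ = ((b - a) / (b - a)) * ((1 / 4) * V f a b) := by ring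
    _ = (1 / 4) * V f a b := by rw [div_self hba, one_mul]
end

section
/- Let f : [a,b] → ℝ be of bounded variation on [a,b]. Then for all x ∈ [a,(a+b)/2], |(f(x)+f(a+b−x))/2 − (1/(b−a))∫_a^b f(t) dt| ≤ Q(x), where Q(x) := (1/(b−a)) [ 2((3a+b)/4 − x)·V_x^{a+b−x}(f) + ∫_a^{(a+b)/2} sgn(x−t)·V_t^{a+b−t}(f) dt ]. -/
open Set MeasureTheory

lemma V_mono' (f : ℝ → ℝ) {c d c' d' : ℝ} (h : Icc c d ⊆ Icc c' d')
    (hfin : eVariationOn f (Icc c' d') ≠ ⊤) : V f c d ≤ V f c' d' :=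
  ENNReal.toReal_mono hfin (eVariationOn.mono f h)

lemma V_add (f : ℝ → ℝ) {c d e : ℝ} (h1 : c ≤ d) (h2 : d ≤ e)
    (hfin : eVariationOn f (Icc c e) ≠ ⊤) : V f c e = V f c d + V f d e := by
  have key := eVariationOn.Icc_add_Icc f (s := (univ : Set ℝ)) h1 h2 (mem_univ d)
  simp only [univ_inter] at key
  have h1f : eVariationOn f (Icc c d) ≠ ⊤ :=
    ne_top_of_le_ne_top hfin (eVariationOn.mono f (Icc_subset_Icc le_rfl h2))
  have h2f : eVariationOn f (Icc d e) ≠ ⊤ :=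
    ne_top_of_le_ne_top hfin (eVariationOn.mono f (Icc_subset_Icc h1 le_rfl))
  rw [V, V, V, ← key, ENNReal.toReal_add h1f h2f]

lemma abs_sub_le_V (f : ℝ → ℝ) {c d : ℝ} (hcd : c ≤ d)
    (hfin : eVariationOn f (Icc c d) ≠ ⊤) : |f d - f c| ≤ V f c d := by
  have h := eVariationOn.edist_le f (x := d) (y := c)
    (show d ∈ Icc c d from ⟨hcd, le_rfl⟩) ⟨le_rfl, hcd⟩
  rw [show |f d - f c| = dist (f d) (f c) from (Real.dist_eq _ _).symm, dist_edist]
  exact ENNReal.toReal_mono hfin h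

/-- Refinement of the companion of Ostrowski's inequality: the bound `Q(x)`. -/
theorem refined_companion_ostrowski_bv (a b : ℝ) (hab : a < b) (f : ℝ → ℝ)
    (hf : BoundedVariationOn f (Icc a b)) :
    ∀ x ∈ Icc a ((a + b) / 2),
      |(f x + f (a + b - x)) / 2 - (1 / (b - a)) * ∫ t in a..b, f t| ≤
        (1 / (b - a)) * (2 * ((3 * a + b) / 4 - x) * V f x (a + b - x)
          + ∫ t in a..((a + b) / 2), Real.sign (x - t) * V f t (a + b - t)) := by
  intro x hx
  obtain ⟨hax, hxm⟩ := hx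
  set m : ℝ := (a + b) / 2 with hm
  have ham : a ≤ m := by rw [hm]; linarith
  have hmb : m ≤ b := by rw [hm]; linarith
  have hxb : x ≤ b := hxm.trans hmb
  have hxy : x ≤ a + b - x := by rw [hm] at hxm; linarith
  have hyb : a + b - x ≤ b := by linarith
  have hay : a ≤ a + b - x := by linarith
  -- finiteness of variations on subintervals
  have hfin : ∀ {c d : ℝ}, a ≤ c → d ≤ b → eVariationOn f (Icc c d) ≠ ⊤ := fun hc hd =>
    ne_top_of_le_ne_top hf (eVariationOn.mono f (Icc_subset_Icc hc hd))
  set g : ℝ → ℝ := fun t => V f t (a + b - t) with hg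
  -- g is antitone on [a, m]
  have hg_anti : AntitoneOn g (Icc a m) := by
    intro s hs t ht hst
    exact V_mono' f (Icc_subset_Icc hst (by linarith)) (hfin hs.1 (by linarith [hs.1]))
  have hg_int : IntervalIntegrable g volume a m :=
    AntitoneOn.intervalIntegrable (by rwa [uIcc_of_le ham])
  have hg_int_ax : IntervalIntegrable g volume a x :=
    hg_int.mono_set (by rw [uIcc_of_le hax, uIcc_of_le ham]; exact Icc_subset_Icc le_rfl hxm)
  have hg_int_xm : IntervalIntegrable g volume x m :=
    hg_int.mono_set (by rw [uIcc_of_le hxm, uIcc_of_le ham]; exact Icc_subset_Icc hax le_rfl)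
  -- integrability of f
  obtain ⟨p, q, hp, hq, hpq⟩ := hf.locallyBoundedVariationOn.exists_monotoneOn_sub_monotoneOn
  have hf_int : IntervalIntegrable f volume a b := by
    rw [hpq]
    exact (MonotoneOn.intervalIntegrable (by rwa [uIcc_of_le hab.le])).sub
      (MonotoneOn.intervalIntegrable (by rwa [uIcc_of_le hab.le]))
  have hf_int_am : IntervalIntegrable f volume a m :=
    hf_int.mono_set (by rw [uIcc_of_le ham, uIcc_of_le hab.le]; exact Icc_subset_Icc le_rfl hmb)
  have hf_int_mb : IntervalIntegrable f volume m b :=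
    hf_int.mono_set (by rw [uIcc_of_le hmb, uIcc_of_le hab.le]; exact Icc_subset_Icc ham le_rfl)
  have hfr_int : IntervalIntegrable (fun t => f (a + b - t)) volume a m := by
    have := hf_int_mb.comp_sub_left (a + b)
    have e1 : a + b - m = m := by rw [hm]; ring
    have e2 : a + b - b = a := by ring
    rw [e1, e2] at this
    exact this.symm
  -- the reflected integral
  have key1 : (∫ t in a..m, f (a + b - t)) = ∫ t in m..b, f t := by
    rw [intervalIntegral.integral_comp_sub_left f (a + b)]
    congr 1
    · rw [hm]; ring
    · ring
  have split : (∫ t in a..b, f t) = (∫ t in a..m, f t) + ∫ t in m..b, f t :=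
    (intervalIntegral.integral_add_adjacent_intervals hf_int_am hf_int_mb).symm
  -- F and its integral
  set F : ℝ → ℝ := fun t => (f t + f (a + b - t)) / 2 with hF
  have hF_int : IntervalIntegrable F volume a m := by
    apply IntervalIntegrable.div_const
    exact hf_int_am.add hfr_int
  have hIF : (∫ t in a..m, F t) = (1 / 2) * ∫ t in a..b, f t := by
    rw [split, ← key1]
    rw [show (fun t => F t) = fun t => (f t + f (a + b - t)) / 2 from rfl]
    rw [intervalIntegral.integral_div]
    rw [intervalIntegral.integral_add hf_int_am hfr_int]
    ring
  -- pointwise bound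
  have hpt : ∀ t ∈ Icc a m, |F x - F t| ≤ |g t - g x| / 2 := by
    intro t ht
    rcases le_total t x with htx | hxt
    · -- t ≤ x
      have h1 : a + b - x ≤ a + b - t := by linarith
      have hub : a + b - t ≤ b := by linarith [ht.1]
      have hadd1 : g t = V f t x + V f x (a + b - t) :=
        V_add f htx (by linarith) (hfin ht.1 hub)
      have hadd2 : V f x (a + b - t) = V f x (a + b - x) + V f (a + b - x) (a + b - t) :=
        V_add f hxy h1 (hfin (ht.1.trans htx) hub)
      have e1 : |f x - f t| ≤ V f t x := abs_sub_le_V f htx (hfin ht.1 hxb)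
      have e2 : |f (a + b - t) - f (a + b - x)| ≤ V f (a + b - x) (a + b - t) :=
        abs_sub_le_V f h1 (hfin hay hub)
      have habs : |F x - F t| ≤ (|f x - f t| + |f (a + b - t) - f (a + b - x)|) / 2 := by
        rw [hF]
        have : (f x + f (a + b - x)) / 2 - (f t + f (a + b - t)) / 2
            = ((f x - f t) - (f (a + b - t) - f (a + b - x))) / 2 := by ring
        rw [this, abs_div]
        simp only [abs_two]
        gcongr
        exact (abs_sub _ _)
      have hkey : |f x - f t| + |f (a + b - t) - f (a + b - x)| ≤ g t - g x := by
        have : g t - g x = V f t x + V f (a + b - x) (a + b - t) := by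
          rw [hadd1, hadd2]; simp only [hg]; ring
        rw [this]
        exact add_le_add e1 e2
      calc |F x - F t| ≤ (|f x - f t| + |f (a + b - t) - f (a + b - x)|) / 2 := habs
        _ ≤ (g t - g x) / 2 := by linarith
        _ ≤ |g t - g x| / 2 := by gcongr; exact le_abs_self _
    · -- x ≤ t
      have h1 : a + b - t ≤ a + b - x := by linarith
      have htt : t ≤ a + b - t := by rw [hm] at ht; linarith [ht.2]
      have hub : a + b - x ≤ b := hyb
      have hadd1 : g x = V f x t + V f t (a + b - x) :=
        V_add f hxt (htt.trans h1) (hfin hax hub)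
      have hadd2 : V f t (a + b - x) = V f t (a + b - t) + V f (a + b - t) (a + b - x) :=
        V_add f htt h1 (hfin (hax.trans hxt) hub)
      have e1 : |f t - f x| ≤ V f x t := abs_sub_le_V f hxt (hfin hax (ht.2.trans hmb))
      have e2 : |f (a + b - x) - f (a + b - t)| ≤ V f (a + b - t) (a + b - x) :=
        abs_sub_le_V f h1 (hfin (ht.1.trans htt) hub)
      have habs : |F x - F t| ≤ (|f t - f x| + |f (a + b - x) - f (a + b - t)|) / 2 := by
        rw [hF]
        have : (f x + f (a + b - x)) / 2 - (f t + f (a + b - t)) / 2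
            = -(((f t - f x) - (f (a + b - x) - f (a + b - t))) / 2) := by ring
        rw [this, abs_neg, abs_div]
        simp only [abs_two]
        gcongr
        exact (abs_sub _ _)
      have hkey : |f t - f x| + |f (a + b - x) - f (a + b - t)| ≤ g x - g t := by
        have : g x - g t = V f x t + V f (a + b - t) (a + b - x) := by
          rw [hadd1, hadd2]; simp only [hg]; ring
        rw [this]
        exact add_le_add e1 e2
      calc |F x - F t| ≤ (|f t - f x| + |f (a + b - x) - f (a + b - t)|) / 2 := habs
        _ ≤ (g x - g t) / 2 := by linarith
        _ ≤ |g t - g x| / 2 := by rw [abs_sub_comm]; gcongr; exact le_abs_self _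
  -- integrability of the bounding functions
  have habs_int : IntervalIntegrable (fun t => |F x - F t|) volume a m :=
    ((intervalIntegrable_const (c := F x)).sub hF_int).abs
  have hgabs_int : IntervalIntegrable (fun t => |g t - g x| / 2) volume a m :=
    ((hg_int.sub (intervalIntegrable_const (c := g x))).abs).div_const 2
  -- first chain of inequalities
  have step1 : |F x - (1 / (b - a)) * ∫ t in a..b, f t|
      ≤ (2 / (b - a)) * ∫ t in a..m, |g t - g x| / 2 := by
    have hba : (0:ℝ) < b - a := by linarith
    have hconst : (∫ _ in a..m, F x) = (m - a) * F x := by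
      rw [intervalIntegral.integral_const]; simp [smul_eq_mul]
    have hdiff : F x - (1 / (b - a)) * ∫ t in a..b, f t
        = (2 / (b - a)) * ∫ t in a..m, (F x - F t) := by
      rw [intervalIntegral.integral_sub (intervalIntegrable_const (c := F x)) hF_int,
        hconst, hIF]
      have hma : m - a = (b - a) / 2 := by rw [hm]; ring
      rw [hma]
      field_simp
    rw [hdiff, abs_mul, abs_of_pos (by positivity : (0:ℝ) < 2 / (b - a))]
    gcongr
    calc |∫ t in a..m, (F x - F t)| ≤ ∫ t in a..m, |F x - F t| :=
          intervalIntegral.abs_integral_le_integral_abs ham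
      _ ≤ ∫ t in a..m, |g t - g x| / 2 :=
          intervalIntegral.integral_mono_on ham habs_int hgabs_int hpt
  -- evaluate ∫ |g t - g x| / 2
  have habs_ax : (∫ t in a..x, |g t - g x|) = (∫ t in a..x, g t) - (x - a) * g x := by
    have : (∫ t in a..x, |g t - g x|) = ∫ t in a..x, (g t - g x) := by
      apply intervalIntegral.integral_congr
      intro t ht
      rw [uIcc_of_le hax] at ht
      have : g x ≤ g t := hg_anti ⟨ht.1, ht.2.trans hxm⟩ ⟨hax, hxm⟩ ht.2
      simp only [abs_of_nonneg (sub_nonneg.2 this)]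
    rw [this, intervalIntegral.integral_sub hg_int_ax (intervalIntegrable_const (c := g x)),
      intervalIntegral.integral_const]
    simp [smul_eq_mul]
  have habs_xm : (∫ t in x..m, |g t - g x|) = (m - x) * g x - ∫ t in x..m, g t := by
    have : (∫ t in x..m, |g t - g x|) = ∫ t in x..m, (g x - g t) := by
      apply intervalIntegral.integral_congr
      intro t ht
      rw [uIcc_of_le hxm] at ht
      have h2 : g t ≤ g x := hg_anti ⟨hax, hxm⟩ ⟨hax.trans ht.1, ht.2⟩ ht.1
      show |g t - g x| = g x - g t
      rw [abs_sub_comm]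
      exact abs_of_nonneg (sub_nonneg.2 h2)
    rw [this, intervalIntegral.integral_sub (intervalIntegrable_const (c := g x)) hg_int_xm,
      intervalIntegral.integral_const]
    simp [smul_eq_mul]
  have habs_split : (∫ t in a..m, |g t - g x|)
      = (∫ t in a..x, |g t - g x|) + ∫ t in x..m, |g t - g x| := by
    rw [intervalIntegral.integral_add_adjacent_intervals
      ((hg_int_ax.sub (intervalIntegrable_const (c := g x))).abs)
      ((hg_int_xm.sub (intervalIntegrable_const (c := g x))).abs)]
  -- the sign integral
  have hx_ae : ∀ᵐ t : ℝ ∂volume, t ≠ x := by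
    simp [ae_iff, Set.setOf_eq_eq_singleton]
  have hsgn_ax : (∫ t in a..x, Real.sign (x - t) * g t) = ∫ t in a..x, g t := by
    apply intervalIntegral.integral_congr_ae
    filter_upwards [hx_ae] with t hne ht
    rw [uIoc_of_le hax] at ht
    have : 0 < x - t := sub_pos.2 (lt_of_le_of_ne ht.2 hne)
    rw [Real.sign_of_pos this, one_mul]
  have hsgn_xm : (∫ t in x..m, Real.sign (x - t) * g t) = ∫ t in x..m, (-g t) := by
    apply intervalIntegral.integral_congr_ae
    filter_upwards with t ht
    rw [uIoc_of_le hxm] at ht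
    have : x - t < 0 := sub_neg.2 ht.1
    rw [Real.sign_of_neg this, neg_one_mul]
  have hsgn_int_ax : IntervalIntegrable (fun t => Real.sign (x - t) * g t) volume a x := by
    rw [intervalIntegrable_iff] at hg_int_ax ⊢
    apply hg_int_ax.congr
    · filter_upwards [ae_restrict_of_ae hx_ae, ae_restrict_mem measurableSet_uIoc] with t hne ht
      rw [uIoc_of_le hax] at ht
      have : 0 < x - t := sub_pos.2 (lt_of_le_of_ne ht.2 hne)
      rw [Real.sign_of_pos this, one_mul]
  have hsgn_int_xm : IntervalIntegrable (fun t => Real.sign (x - t) * g t) volume x m := by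
    rw [intervalIntegrable_iff] at hg_int_xm ⊢
    apply hg_int_xm.neg.congr
    · filter_upwards [ae_restrict_mem measurableSet_uIoc] with t ht
      rw [uIoc_of_le hxm] at ht
      have : x - t < 0 := sub_neg.2 ht.1
      rw [Real.sign_of_neg this, neg_one_mul]
      rfl
  have hsgn : (∫ t in a..m, Real.sign (x - t) * g t)
      = (∫ t in a..x, g t) - ∫ t in x..m, g t := by
    rw [← intervalIntegral.integral_add_adjacent_intervals hsgn_int_ax hsgn_int_xm,
      hsgn_ax, hsgn_xm, intervalIntegral.integral_neg]
    ring
  -- final assembly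
  have hgoal : (2 / (b - a)) * (∫ t in a..m, |g t - g x| / 2)
      = (1 / (b - a)) * (2 * ((3 * a + b) / 4 - x) * g x
          + ∫ t in a..m, Real.sign (x - t) * g t) := by
    have : (∫ t in a..m, |g t - g x| / 2) = (∫ t in a..m, |g t - g x|) / 2 := by
      rw [intervalIntegral.integral_div]
    rw [this, habs_split, habs_ax, habs_xm, hsgn]
    have hS : ((∫ t in a..x, g t) - (x - a) * g x) + ((m - x) * g x - ∫ t in x..m, g t)
        = 2 * ((3 * a + b) / 4 - x) * g x + ((∫ t in a..x, g t) - ∫ t in x..m, g t) := by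
      rw [hm]; ring
    rw [hS]
    ring
  calc |(f x + f (a + b - x)) / 2 - (1 / (b - a)) * ∫ t in a..b, f t|
      = |F x - (1 / (b - a)) * ∫ t in a..b, f t| := by rw [hF]
    _ ≤ (2 / (b - a)) * ∫ t in a..m, |g t - g x| / 2 := step1
    _ = (1 / (b - a)) * (2 * ((3 * a + b) / 4 - x) * g x
          + ∫ t in a..m, Real.sign (x - t) * g t) := hgoal
end

section
/- Let f : [a,b] → ℝ be of bounded variation on [a,b]. Then for all x ∈ [a,(a+b)/2], the quantity Q(x) := (1/(b−a)) [ 2((3a+b)/4 − x)·V_x^{a+b−x}(f) + ∫_a^{(a+b)/2} sgn(x−t)·V_t^{a+b−t}(f) dt ] satisfies Q(x) ≤ (1/(b−a)) [ (x−a)·V_a^x(f) + ((a+b)/2 − x)·V_x^{a+b−x}(f) + (x−a)·V_{a+b−x}^b(f) ]. -/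
open Set MeasureTheory

/-- The refined bound `Q(x)` is smaller than the original bound of the companion of
Ostrowski's inequality. -/
theorem refined_bound_le_companion_bound (a b : ℝ) (hab : a < b) (f : ℝ → ℝ)
    (hf : BoundedVariationOn f (Icc a b)) :
    ∀ x ∈ Icc a ((a + b) / 2),
      (1 / (b - a)) * (2 * ((3 * a + b) / 4 - x) * V f x (a + b - x)
          + ∫ t in a..((a + b) / 2), Real.sign (x - t) * V f t (a + b - t)) ≤
        (1 / (b - a)) * ((x - a) * V f a x + ((a + b) / 2 - x) * V f x (a + b - x)
          + (x - a) * V f (a + b - x) b) := by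
  intro x hx
  obtain ⟨hax, hxm⟩ := hx
  set m : ℝ := (a + b) / 2 with hm
  have hxb : x ≤ a + b - x := by simp only [hm] at hxm; linarith
  have habx : a + b - x ≤ b := by linarith
  have hmb : m ≤ b := by simp only [hm]; linarith
  -- finiteness
  have hfin : ∀ c d : ℝ, a ≤ c → d ≤ b → eVariationOn f (Icc c d) ≠ ⊤ := by
    intro c d hc hd
    exact ne_top_of_le_ne_top hf (eVariationOn.mono f (Icc_subset_Icc hc hd))
  set g : ℝ → ℝ := fun t => V f t (a + b - t) with hg
  have hnn : ∀ t, 0 ≤ g t := fun t => ENNReal.toReal_nonneg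
  have hgle : ∀ t ∈ Icc a m, g t ≤ V f a b := by
    intro t ht
    exact ENNReal.toReal_mono hf
      (eVariationOn.mono f (Icc_subset_Icc ht.1 (by linarith [ht.1])))
  have hanti : AntitoneOn g (Icc a m) := by
    intro s hs t ht hst
    exact ENNReal.toReal_mono (hfin s (a + b - s) hs.1 (by linarith [hs.1]))
      (eVariationOn.mono f (Icc_subset_Icc hst (by linarith)))
  -- additivity of variation
  have hadd : V f a b = V f a x + V f x (a + b - x) + V f (a + b - x) b := by
    have h1 : eVariationOn f (Icc a x) + eVariationOn f (Icc x (a + b - x))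
        = eVariationOn f (Icc a (a + b - x)) := by
      simpa using eVariationOn.Icc_add_Icc f (s := (univ : Set ℝ)) hax hxb (mem_univ x)
    have h2 : eVariationOn f (Icc a (a + b - x)) + eVariationOn f (Icc (a + b - x) b)
        = eVariationOn f (Icc a b) := by
      simpa using eVariationOn.Icc_add_Icc f (s := (univ : Set ℝ))
        (le_trans hax hxb) habx (mem_univ (a + b - x))
    have f1 := hfin a x le_rfl (by linarith)
    have f2 := hfin x (a + b - x) hax habx
    have f3 := hfin (a + b - x) b (by linarith) le_rfl
    simp only [V]
    rw [← h2, ← h1, ENNReal.toReal_add (by rw [h1]; exact hfin a (a + b - x) le_rfl habx) f3,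
      ENNReal.toReal_add f1 f2]
  -- integrability
  have hIax : IntervalIntegrable g volume a x :=
    (hanti.mono (by rw [uIcc_of_le hax]; exact Icc_subset_Icc le_rfl hxm)).intervalIntegrable
  have hIxm : IntervalIntegrable g volume x m :=
    (hanti.mono (by rw [uIcc_of_le hxm]; exact Icc_subset_Icc hax le_rfl)).intervalIntegrable
  have hnex : ∀ᵐ t : ℝ, t ≠ x := by
    rw [MeasureTheory.ae_iff]
    simpa using Real.volume_singleton (x := x)
  have hae1 : ∀ᵐ t : ℝ, t ∈ uIoc a x → Real.sign (x - t) * g t = g t := by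
    filter_upwards [hnex] with t ht hmem
    rw [uIoc_of_le hax] at hmem
    have : t < x := lt_of_le_of_ne hmem.2 ht
    rw [Real.sign_of_pos (by linarith), one_mul]
  have hae2 : ∀ᵐ t : ℝ, t ∈ uIoc x m → Real.sign (x - t) * g t = -g t := by
    refine Filter.Eventually.of_forall fun t hmem => ?_
    rw [uIoc_of_le hxm] at hmem
    rw [Real.sign_of_neg (by linarith [hmem.1]), neg_one_mul]
  have hI1 : IntervalIntegrable (fun t => Real.sign (x - t) * g t) volume a x := by
    refine hIax.congr_ae ?_
    exact ((MeasureTheory.ae_restrict_iff' measurableSet_uIoc).mpr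
      (by filter_upwards [hae1] with t h ht; exact (h ht).symm))
  have hI2 : IntervalIntegrable (fun t => Real.sign (x - t) * g t) volume x m := by
    refine (hIxm.neg).congr_ae ?_
    exact ((MeasureTheory.ae_restrict_iff' measurableSet_uIoc).mpr
      (by filter_upwards [hae2] with t h ht; exact (h ht).symm))
  have hsplit : (∫ t in a..m, Real.sign (x - t) * g t)
      = (∫ t in a..x, Real.sign (x - t) * g t) + ∫ t in x..m, Real.sign (x - t) * g t :=
    (intervalIntegral.integral_add_adjacent_intervals hI1 hI2).symm
  have he1 : (∫ t in a..x, Real.sign (x - t) * g t) = ∫ t in a..x, g t :=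
    intervalIntegral.integral_congr_ae hae1
  have he2 : (∫ t in x..m, Real.sign (x - t) * g t) = ∫ t in x..m, -g t :=
    intervalIntegral.integral_congr_ae hae2
  have hb1 : (∫ t in a..x, g t) ≤ (x - a) * V f a b := by
    have := intervalIntegral.integral_mono_on hax hIax intervalIntegrable_const
      (fun t ht => hgle t ⟨ht.1, le_trans ht.2 hxm⟩)
    simpa [mul_comm] using this
  have hb2 : 0 ≤ ∫ t in x..m, g t :=
    intervalIntegral.integral_nonneg hxm fun t _ => hnn t
  have hIle : (∫ t in a..m, Real.sign (x - t) * g t) ≤ (x - a) * V f a b := by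
    rw [hsplit, he1, he2, intervalIntegral.integral_neg]
    linarith
  have hcoef : (0 : ℝ) ≤ 1 / (b - a) := div_nonneg zero_le_one (by linarith)
  apply mul_le_mul_of_nonneg_left _ hcoef
  have hIle' : (∫ t in a..m, Real.sign (x - t) * V f t (a + b - t)) ≤ (x - a) * V f a b := hIle
  have hsub : (x - a) * V f a b = (x - a) * V f a x + (x - a) * V f x (a + b - x)
      + (x - a) * V f (a + b - x) b := by rw [hadd]; ring
  simp only [hm] at hIle' ⊢
  nlinarith [hIle', hsub]
end

section
/- Let f : [a,b] → ℝ be of bounded variation on [a,b], and let p > 1 with 1/p + 1/q = 1. Then (1/2)·V_a^b(f) − (1/(b−a)) ∫_a^{(a+b)/2} V_t^{a+b−t}(f) dt ≤ (1/(b−a)) [V_a^b(f)]^{1/q} · [ ((b−a)/2)^p · V_a^b(f) − p ∫_a^{(a+b)/2} ((a+b)/2 − t)^{p−1}·V_t^{a+b−t}(f) dt ]^{1/p} ≤ (1/2)·V_a^b(f). -/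
open Set

open MeasureTheory intervalIntegral

lemma integral_weight_aux (c m p : ℝ) (hp : 1 < p) :
    ∫ t in c..m, (m - t) ^ (p - 1) = (m - c) ^ p / p := by
  have h1 : (∫ t in c..m, (m - t) ^ (p - 1)) = ∫ x in (m - m)..(m - c), x ^ (p - 1) :=
    intervalIntegral.integral_comp_sub_left (fun x => x ^ (p - 1)) m
  rw [h1, sub_self, integral_rpow (Or.inl (by linarith))]
  have hp1 : p - 1 + 1 = p := by ring
  rw [hp1, Real.zero_rpow (by linarith), sub_zero]

lemma weight_anti (m p : ℝ) (hp : 1 < p) (s : Set ℝ) (hs : ∀ x ∈ s, x ≤ m) :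
    AntitoneOn (fun t => (m - t) ^ (p - 1)) s := by
  intro x hx y hy hxy
  exact Real.rpow_le_rpow (by linarith [hs y hy]) (by linarith) (by linarith)

lemma key_ineq (a m p Vb : ℝ) (ham : a < m) (hp : 1 < p)
    (g : ℝ → ℝ)
    (hgi : IntervalIntegrable g MeasureTheory.volume a m)
    (hwgi : IntervalIntegrable (fun t => (m - t) ^ (p - 1) * g t) MeasureTheory.volume a m)
    (hg0 : ∀ t ∈ Icc a m, 0 ≤ g t) (hgV : ∀ t ∈ Icc a m, g t ≤ Vb) :
    (∫ t in a..m, g t) ^ p ≤ Vb ^ (p - 1) * (p * ∫ t in a..m, (m - t) ^ (p - 1) * g t) := by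
  have hp0 : (0:ℝ) < p := by linarith
  have hVb0 : 0 ≤ Vb := le_trans (hg0 a ⟨le_refl a, ham.le⟩) (hgV a ⟨le_refl a, ham.le⟩)
  set J := ∫ t in a..m, g t with hJdef
  have hJ0 : 0 ≤ J := intervalIntegral.integral_nonneg ham.le hg0
  have hWG0 : 0 ≤ ∫ t in a..m, (m - t) ^ (p - 1) * g t :=
    intervalIntegral.integral_nonneg ham.le (fun t ht =>
      mul_nonneg (Real.rpow_nonneg (by linarith [ht.2]) _) (hg0 t ht))
  rcases eq_or_lt_of_le hJ0 with hJz | hJpos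
  · rw [← hJz, Real.zero_rpow (by linarith)]
    exact mul_nonneg (Real.rpow_nonneg hVb0 _) (mul_nonneg hp0.le hWG0)
  -- J > 0
  have hJle : J ≤ (m - a) * Vb := by
    calc J ≤ ∫ _t in a..m, Vb :=
          intervalIntegral.integral_mono_on ham.le hgi intervalIntegrable_const hgV
      _ = (m - a) * Vb := by simp [smul_eq_mul]
  have hVpos : 0 < Vb := by
    by_contra hVn
    push_neg at hVn
    nlinarith
  set A := J / Vb with hAdef
  have hA0 : 0 < A := div_pos hJpos hVpos
  have hAle : A ≤ m - a := by rw [hAdef, div_le_iff₀ hVpos]; linarith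
  have hJA : J = A * Vb := by rw [hAdef, div_mul_cancel₀ J hVpos.ne']
  set c := m - A with hcdef
  have hac : a ≤ c := by simp [hcdef]; linarith
  have hcm : c ≤ m := by simp [hcdef]; linarith
  -- integrability on pieces
  have hsub1 : uIcc a c ⊆ uIcc a m := by
    rw [uIcc_of_le hac, uIcc_of_le ham.le]; exact Icc_subset_Icc le_rfl hcm
  have hsub2 : uIcc c m ⊆ uIcc a m := by
    rw [uIcc_of_le hcm, uIcc_of_le ham.le]; exact Icc_subset_Icc hac le_rfl
  have hgi1 : IntervalIntegrable g volume a c := hgi.mono_set hsub1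
  have hgi2 : IntervalIntegrable g volume c m := hgi.mono_set hsub2
  have hwgi1 := hwgi.mono_set hsub1
  have hwgi2 := hwgi.mono_set hsub2
  have hwi2 : IntervalIntegrable (fun t => (m - t) ^ (p - 1)) volume c m := by
    apply AntitoneOn.intervalIntegrable
    exact weight_anti m p hp _ (fun x hx => by rw [uIcc_of_le hcm] at hx; exact hx.2)
  -- split the integral
  have hsplit : (∫ t in a..c, (m - t) ^ (p - 1) * g t) + (∫ t in c..m, (m - t) ^ (p - 1) * g t)
      = ∫ t in a..m, (m - t) ^ (p - 1) * g t :=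
    intervalIntegral.integral_add_adjacent_intervals hwgi1 hwgi2
  have hgsplit : (∫ t in a..c, g t) + (∫ t in c..m, g t) = J :=
    intervalIntegral.integral_add_adjacent_intervals hgi1 hgi2
  -- S1
  have S1 : A ^ (p - 1) * ∫ t in a..c, g t ≤ ∫ t in a..c, (m - t) ^ (p - 1) * g t := by
    rw [← intervalIntegral.integral_const_mul]
    apply intervalIntegral.integral_mono_on hac (hgi1.const_mul _) hwgi1
    intro t ht
    have h1 : A ^ (p - 1) ≤ (m - t) ^ (p - 1) :=
      Real.rpow_le_rpow hA0.le (by simp [hcdef] at ht; linarith [ht.2]) (by linarith)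
    exact mul_le_mul_of_nonneg_right h1 (hg0 t ⟨ht.1, le_trans ht.2 hcm⟩)
  -- S2
  have S2 : (∫ t in c..m, ((m - t) ^ (p - 1) * Vb - A ^ (p - 1) * (Vb - g t)))
      ≤ ∫ t in c..m, (m - t) ^ (p - 1) * g t := by
    apply intervalIntegral.integral_mono_on hcm
    · exact ((hwi2.mul_const _).sub ((intervalIntegrable_const.sub hgi2).const_mul _))
    · exact hwgi2
    · intro t ht
      have htm : t ∈ Icc a m := ⟨le_trans hac ht.1, ht.2⟩
      have h1 : (m - t) ^ (p - 1) ≤ A ^ (p - 1) :=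
        Real.rpow_le_rpow (by linarith [ht.2]) (by simp [hcdef] at ht; linarith [ht.1]) (by linarith)
      have h2 : 0 ≤ Vb - g t := by linarith [hgV t htm]
      have h3 : 0 ≤ (m - t) ^ (p - 1) := Real.rpow_nonneg (by linarith [ht.2]) _
      nlinarith [mul_le_mul_of_nonneg_right h1 h2]
  -- compute S2's LHS
  have hI2 : (∫ t in c..m, ((m - t) ^ (p - 1) * Vb - A ^ (p - 1) * (Vb - g t)))
      = Vb * ((m - c) ^ p / p) - A ^ (p - 1) * (Vb * (m - c) - ∫ t in c..m, g t) := by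
    rw [intervalIntegral.integral_sub (hwi2.mul_const _)
        ((intervalIntegrable_const.sub hgi2).const_mul _),
      intervalIntegral.integral_mul_const, integral_weight_aux c m p hp,
      intervalIntegral.integral_const_mul,
      intervalIntegral.integral_sub intervalIntegrable_const hgi2]
    simp [smul_eq_mul]
    ring
  have hmc : m - c = A := by simp [hcdef]
  have hApow : A ^ (p - 1) * A = A ^ p := by
    rw [← Real.rpow_add_one hA0.ne' (p - 1)]; ring_nf
  have hVpow : Vb ^ (p - 1) * Vb = Vb ^ p := by
    rw [← Real.rpow_add_one hVpos.ne' (p - 1)]; ring_nf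
  have hJp : J ^ p = A ^ p * Vb ^ p := by
    rw [hJA, Real.mul_rpow hA0.le hVpos.le]
  -- assemble
  rw [hI2, hmc] at S2
  have hXJ : A ^ (p - 1) * (∫ t in a..c, g t) + A ^ (p - 1) * (∫ t in c..m, g t)
      = A ^ p * Vb := by
    rw [← mul_add, hgsplit, hJA, ← hApow]; ring
  have hmain : Vb * (A ^ p / p) ≤ ∫ t in a..m, (m - t) ^ (p - 1) * g t := by
    rw [← hsplit]
    have hXVA : A ^ (p - 1) * (Vb * A) = A ^ p * Vb := by rw [← hApow]; ring
    nlinarith [S1, S2, hXJ, hXVA]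
  rw [hJp]
  have hpc : p * (Vb * (A ^ p / p)) = Vb * A ^ p := by field_simp
  calc A ^ p * Vb ^ p = Vb ^ (p - 1) * (p * (Vb * (A ^ p / p))) := by
        rw [hpc, ← mul_assoc, hVpow]; ring
    _ ≤ Vb ^ (p - 1) * (p * ∫ t in a..m, (m - t) ^ (p - 1) * g t) := by
        apply mul_le_mul_of_nonneg_left _ (Real.rpow_nonneg hVpos.le _)
        exact mul_le_mul_of_nonneg_left hmain hp0.le

/-- Hölder-type bounds in the refined trapezoid inequality. -/
theorem refined_trapezoid_holder (a b : ℝ) (hab : a < b) (f : ℝ → ℝ)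
    (hf : BoundedVariationOn f (Icc a b))
    (p q : ℝ) (hp : 1 < p) (hpq : 1 / p + 1 / q = 1) :
    (1 / 2) * V f a b - (1 / (b - a)) * (∫ t in a..((a + b) / 2), V f t (a + b - t)) ≤
        (1 / (b - a)) * (V f a b) ^ (1 / q) *
          (((b - a) / 2) ^ p * V f a b
            - p * ∫ t in a..((a + b) / 2),
                ((a + b) / 2 - t) ^ (p - 1) * V f t (a + b - t)) ^ (1 / p) ∧
      (1 / (b - a)) * (V f a b) ^ (1 / q) *
          (((b - a) / 2) ^ p * V f a b
            - p * ∫ t in a..((a + b) / 2),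
                ((a + b) / 2 - t) ^ (p - 1) * V f t (a + b - t)) ^ (1 / p) ≤
        (1 / 2) * V f a b := by
  have hp0 : (0:ℝ) < p := by linarith
  have hq : 1 / q = 1 - 1 / p := by linarith
  have hp1 : 1 / p < 1 := by rw [div_lt_one hp0]; exact hp
  have hp1' : 0 < 1 / p := by positivity
  set m := (a + b) / 2 with hmdef
  have ham : a < m := by rw [hmdef]; linarith
  have hma : m - a = (b - a) / 2 := by rw [hmdef]; ring
  set Vab := V f a b with hVdef
  have hVab0 : 0 ≤ Vab := ENNReal.toReal_nonneg
  have hsub : ∀ t ∈ Icc a m, Icc t (a + b - t) ⊆ Icc a b := by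
    intro t ht
    exact Icc_subset_Icc ht.1 (by linarith [ht.1])
  have hle : ∀ t ∈ Icc a m, V f t (a + b - t) ≤ Vab := by
    intro t ht
    exact ENNReal.toReal_mono hf (eVariationOn.mono f (hsub t ht))
  have h0 : ∀ t, 0 ≤ V f t (a + b - t) := fun t => ENNReal.toReal_nonneg
  have hanti : AntitoneOn (fun t => V f t (a + b - t)) (Icc a m) := by
    intro s hs t ht hst
    have hne : eVariationOn f (Icc s (a + b - s)) ≠ ⊤ :=
      ne_top_of_le_ne_top hf (eVariationOn.mono f (hsub s hs))
    exact ENNReal.toReal_mono hne (eVariationOn.mono f (Icc_subset_Icc hst (by linarith)))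
  have hInt : IntervalIntegrable (fun t => V f t (a + b - t)) volume a m :=
    AntitoneOn.intervalIntegrable (by rw [uIcc_of_le ham.le]; exact hanti)
  have hW0 : ∀ t ∈ Icc a m, 0 ≤ (m - t) ^ (p - 1) := by
    intro t ht
    exact Real.rpow_nonneg (by linarith [ht.2]) _
  have hIntW : IntervalIntegrable (fun t => (m - t) ^ (p - 1)) volume a m :=
    AntitoneOn.intervalIntegrable (by
      rw [uIcc_of_le ham.le]
      exact weight_anti m p hp _ (fun x hx => hx.2))
  have hIntWH : IntervalIntegrable (fun t => (m - t) ^ (p - 1) * V f t (a + b - t)) volume a m := by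
    apply AntitoneOn.intervalIntegrable
    rw [uIcc_of_le ham.le]
    intro s hs t ht hst
    calc (m - t) ^ (p - 1) * V f t (a + b - t)
        ≤ (m - s) ^ (p - 1) * V f t (a + b - t) :=
          mul_le_mul_of_nonneg_right
            (weight_anti m p hp (Icc a m) (fun x hx => hx.2) hs ht hst) (h0 t)
      _ ≤ (m - s) ^ (p - 1) * V f s (a + b - s) :=
          mul_le_mul_of_nonneg_left (hanti hs ht hst) (hW0 s hs)
  -- the function g
  set g : ℝ → ℝ := fun t => Vab - V f t (a + b - t) with hgdef
  have hgi : IntervalIntegrable g volume a m := intervalIntegrable_const.sub hInt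
  have hwg_eq : (fun t => (m - t) ^ (p - 1) * g t)
      = fun t => (m - t) ^ (p - 1) * Vab - (m - t) ^ (p - 1) * V f t (a + b - t) := by
    funext t; simp [hgdef]; ring
  have hwgi : IntervalIntegrable (fun t => (m - t) ^ (p - 1) * g t) volume a m := by
    rw [hwg_eq]; exact (hIntW.mul_const _).sub hIntWH
  have hg0 : ∀ t ∈ Icc a m, 0 ≤ g t := fun t ht => by simp [hgdef]; linarith [hle t ht]
  have hgV : ∀ t ∈ Icc a m, g t ≤ Vab := fun t ht => by simp [hgdef]; linarith [h0 t]
  have hKey := key_ineq a m p Vab ham hp g hgi hwgi hg0 hgV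
  -- bridge identities
  set J := ∫ t in a..m, g t with hJdef
  have hJ0 : 0 ≤ J := intervalIntegral.integral_nonneg ham.le hg0
  have hJeq : J = (b - a) / 2 * Vab - ∫ t in a..m, V f t (a + b - t) := by
    rw [hJdef, hgdef, intervalIntegral.integral_sub intervalIntegrable_const hInt]
    simp only [intervalIntegral.integral_const, smul_eq_mul, hma]
  set B := ((b - a) / 2) ^ p * Vab
      - p * ∫ t in a..m, (m - t) ^ (p - 1) * V f t (a + b - t) with hBdef
  have hBeq : B = p * ∫ t in a..m, (m - t) ^ (p - 1) * g t := by
    rw [hBdef, hwg_eq,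
      intervalIntegral.integral_sub (hIntW.mul_const _) hIntWH,
      intervalIntegral.integral_mul_const, integral_weight_aux a m p hp, hma]
    have hpne : p ≠ 0 := by linarith
    field_simp
  have hWG0 : 0 ≤ ∫ t in a..m, (m - t) ^ (p - 1) * g t :=
    intervalIntegral.integral_nonneg ham.le
      (fun t ht => mul_nonneg (hW0 t ht) (hg0 t ht))
  have hB0 : 0 ≤ B := by rw [hBeq]; positivity
  have hBle : B ≤ ((b - a) / 2) ^ p * Vab := by
    rw [hBeq]
    have : (∫ t in a..m, (m - t) ^ (p - 1) * g t) ≤ ∫ t in a..m, (m - t) ^ (p - 1) * Vab := by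
      apply intervalIntegral.integral_mono_on ham.le hwgi (hIntW.mul_const _)
      intro t ht
      exact mul_le_mul_of_nonneg_left (hgV t ht) (hW0 t ht)
    calc p * ∫ t in a..m, (m - t) ^ (p - 1) * g t
        ≤ p * ∫ t in a..m, (m - t) ^ (p - 1) * Vab := by
          exact mul_le_mul_of_nonneg_left this hp0.le
      _ = ((b - a) / 2) ^ p * Vab := by
          rw [intervalIntegral.integral_mul_const, integral_weight_aux a m p hp, hma]
          field_simp
  rw [← hBeq] at hKey
  -- main middle inequality : J ≤ Vab ^ (1/q) * B ^ (1/p)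
  have hmid : J ≤ Vab ^ (1 / q) * B ^ (1 / p) := by
    have e1 : (J ^ p) ^ (1 / p) = J := by
      rw [← Real.rpow_mul hJ0, mul_one_div_cancel hp0.ne', Real.rpow_one]
    have e2 : ((p - 1) * (1 / p)) = 1 / q := by rw [hq]; field_simp
    calc J = (J ^ p) ^ (1 / p) := e1.symm
      _ ≤ (Vab ^ (p - 1) * B) ^ (1 / p) :=
          Real.rpow_le_rpow (Real.rpow_nonneg hJ0 _) hKey hp1'.le
      _ = Vab ^ (1 / q) * B ^ (1 / p) := by
          rw [Real.mul_rpow (Real.rpow_nonneg hVab0 _) hB0, ← Real.rpow_mul hVab0, e2]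
  have hbane : b - a ≠ 0 := by linarith
  have hba : (0:ℝ) < 1 / (b - a) := one_div_pos.2 (by linarith)
  constructor
  · have lhs_eq : (1 / 2) * Vab - (1 / (b - a)) * ∫ t in a..m, V f t (a + b - t)
        = (1 / (b - a)) * J := by
      rw [hJeq]
      field_simp [hbane]
    rw [lhs_eq, mul_assoc]
    exact mul_le_mul_of_nonneg_left hmid hba.le
  · have e3 : (((b - a) / 2) ^ p * Vab) ^ (1 / p) = (b - a) / 2 * Vab ^ (1 / p) := by
      rw [Real.mul_rpow (Real.rpow_nonneg (by linarith) _) hVab0,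
        ← Real.rpow_mul (by linarith : (0:ℝ) ≤ (b - a) / 2),
        mul_one_div_cancel hp0.ne', Real.rpow_one]
    have e4 : Vab ^ (1 / q) * Vab ^ (1 / p) = Vab := by
      rw [← Real.rpow_add' hVab0 (by rw [add_comm] at hpq; rw [hpq]; norm_num)]
      rw [add_comm] at hpq
      rw [hpq, Real.rpow_one]
    have hBp : B ^ (1 / p) ≤ (b - a) / 2 * Vab ^ (1 / p) := by
      rw [← e3]
      exact Real.rpow_le_rpow hB0 hBle hp1'.le
    calc (1 / (b - a)) * Vab ^ (1 / q) * B ^ (1 / p)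
        ≤ (1 / (b - a)) * Vab ^ (1 / q) * ((b - a) / 2 * Vab ^ (1 / p)) := by
          exact mul_le_mul_of_nonneg_left hBp
            (mul_nonneg hba.le (Real.rpow_nonneg hVab0 _))
      _ = (1 / 2) * Vab := by
          rw [show (1 / (b - a)) * Vab ^ (1 / q) * ((b - a) / 2 * Vab ^ (1 / p))
              = (1 / (b - a) * ((b - a) / 2)) * (Vab ^ (1 / q) * Vab ^ (1 / p)) by ring,
            e4]
          field_simp [hbane]
end

section
/- Let f : [a,b] → ℝ be of bounded variation on [a,b]. Then |f((a+b)/2) − (1/(b−a))∫_a^b f(t) dt| ≤ (1/(b−a)) ∫_a^{(a+b)/2} V_t^{a+b−t}(f) dt ≤ (1/2)·V_a^b(f). -/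
open Set MeasureTheory intervalIntegral

/-- Refined midpoint inequality for functions of bounded variation. -/
theorem refined_midpoint_bv (a b : ℝ) (hab : a < b) (f : ℝ → ℝ)
    (hf : BoundedVariationOn f (Icc a b)) :
    |f ((a + b) / 2) - (1 / (b - a)) * ∫ t in a..b, f t| ≤
        (1 / (b - a)) * ∫ t in a..((a + b) / 2), V f t (a + b - t) ∧
      (1 / (b - a)) * (∫ t in a..((a + b) / 2), V f t (a + b - t)) ≤
        (1 / 2) * V f a b := by
  set m : ℝ := (a + b) / 2 with hm
  have ham : a ≤ m := by rw [hm]; linarith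
  have hmb : m ≤ b := by rw [hm]; linarith
  have hba : (0 : ℝ) < b - a := by linarith
  have hfin : ∀ {s : Set ℝ}, s ⊆ Icc a b → eVariationOn f s ≠ ⊤ := by
    intro s hs
    exact ((eVariationOn.mono f hs).trans_lt (lt_top_iff_ne_top.2 hf)).ne
  -- integrability of f on subintervals of [a,b]
  obtain ⟨p, q, hp, hq, hpq⟩ :=
    hf.locallyBoundedVariationOn.exists_monotoneOn_sub_monotoneOn
  have hfint : ∀ c d : ℝ, c ∈ Icc a b → d ∈ Icc a b → IntervalIntegrable f volume c d := by
    intro c d hc hd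
    have hsub : uIcc c d ⊆ Icc a b := uIcc_subset_Icc hc hd
    rw [hpq]
    exact ((hp.mono hsub).intervalIntegrable).sub ((hq.mono hsub).intervalIntegrable)
  have hIab : IntervalIntegrable f volume a b := hfint a b ⟨le_rfl, hab.le⟩ ⟨hab.le, le_rfl⟩
  have hIam : IntervalIntegrable (fun t => |f m - f t|) volume a m :=
    (intervalIntegrable_const.sub (hfint a m ⟨le_rfl, hab.le⟩ ⟨ham, hmb⟩)).abs
  have hImb : IntervalIntegrable (fun t => |f m - f t|) volume m b :=
    (intervalIntegrable_const.sub (hfint m b ⟨ham, hmb⟩ ⟨hab.le, le_rfl⟩)).abs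
  have hIrefl : IntervalIntegrable (fun t => |f m - f (a + b - t)|) volume a m := by
    have := hImb.comp_sub_left (a + b)
    have e1 : a + b - m = m := by rw [hm]; ring
    have e2 : a + b - b = a := by ring
    rw [e1, e2] at this
    exact this.symm
  -- the antitone variation function
  have hanti : AntitoneOn (fun t => V f t (a + b - t)) (Icc a m) := by
    intro t₁ h₁ t₂ h₂ h12
    have hsub : Icc t₂ (a + b - t₂) ⊆ Icc t₁ (a + b - t₁) :=
      Icc_subset_Icc h12 (by linarith)
    have hsub' : Icc t₁ (a + b - t₁) ⊆ Icc a b :=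
      Icc_subset_Icc h₁.1 (by have := h₁.1; linarith)
    exact ENNReal.toReal_mono (hfin hsub') (eVariationOn.mono f hsub)
  have hIV : IntervalIntegrable (fun t => V f t (a + b - t)) volume a m := by
    apply AntitoneOn.intervalIntegrable
    rwa [uIcc_of_le ham]
  -- pointwise key inequality
  have hkey : ∀ t ∈ Icc a m, |f m - f t| + |f m - f (a + b - t)| ≤ V f t (a + b - t) := by
    intro t ht
    have htm : t ≤ m := ht.2
    have hmc : m ≤ a + b - t := by have := ht.2; rw [hm] at *; linarith
    have hsub1 : Icc t m ⊆ Icc a b := Icc_subset_Icc ht.1 hmb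
    have hsub2 : Icc m (a + b - t) ⊆ Icc a b :=
      Icc_subset_Icc ham (by have := ht.1; linarith)
    have hsplit := eVariationOn.Icc_add_Icc f (s := univ) htm hmc (mem_univ m)
    simp only [univ_inter] at hsplit
    have h1 : |f m - f t| ≤ (eVariationOn f (Icc t m)).toReal := by
      rw [show |f m - f t| = dist (f t) (f m) by rw [Real.dist_eq]; rw [abs_sub_comm],
        dist_edist]
      exact ENNReal.toReal_mono (hfin hsub1)
        (eVariationOn.edist_le f ⟨le_rfl, htm⟩ ⟨htm, le_rfl⟩)
    have h2 : |f m - f (a + b - t)| ≤ (eVariationOn f (Icc m (a + b - t))).toReal := by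
      rw [show |f m - f (a + b - t)| = dist (f m) (f (a + b - t)) by rw [Real.dist_eq],
        dist_edist]
      exact ENNReal.toReal_mono (hfin hsub2)
        (eVariationOn.edist_le f ⟨le_rfl, hmc⟩ ⟨hmc, le_rfl⟩)
    have := add_le_add h1 h2
    rwa [← ENNReal.toReal_add (hfin hsub1) (hfin hsub2), hsplit] at this
  constructor
  · -- first inequality
    have key1 : f m - (1 / (b - a)) * ∫ t in a..b, f t
        = (1 / (b - a)) * ∫ t in a..b, (f m - f t) := by
      rw [intervalIntegral.integral_sub intervalIntegrable_const hIab,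
        intervalIntegral.integral_const, smul_eq_mul]
      field_simp
    have habs : |∫ t in a..b, (f m - f t)| ≤ ∫ t in a..m, V f t (a + b - t) := by
      calc |∫ t in a..b, (f m - f t)| ≤ ∫ t in a..b, |f m - f t| :=
            intervalIntegral.abs_integral_le_integral_abs hab.le
        _ = (∫ t in a..m, |f m - f t|) + ∫ t in m..b, |f m - f t| :=
            (intervalIntegral.integral_add_adjacent_intervals hIam hImb).symm
        _ = (∫ t in a..m, |f m - f t|) + ∫ t in a..m, |f m - f (a + b - t)| := by
            congr 1
            rw [intervalIntegral.integral_comp_sub_left (fun x => |f m - f x|) (a + b)]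
            congr 1 <;> [skip; ring]
            rw [hm]; ring
        _ = ∫ t in a..m, (|f m - f t| + |f m - f (a + b - t)|) :=
            (intervalIntegral.integral_add hIam hIrefl).symm
        _ ≤ ∫ t in a..m, V f t (a + b - t) :=
            intervalIntegral.integral_mono_on ham (hIam.add hIrefl) hIV hkey
    rw [key1, abs_mul, abs_of_pos (by positivity : (0:ℝ) < 1 / (b - a))]
    exact mul_le_mul_of_nonneg_left habs (by positivity)
  · -- second inequality
    have hle : ∀ t ∈ Icc a m, V f t (a + b - t) ≤ V f a b := by
      intro t ht
      exact ENNReal.toReal_mono hf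
        (eVariationOn.mono f (Icc_subset_Icc ht.1 (by have := ht.1; linarith)))
    have : (∫ t in a..m, V f t (a + b - t)) ≤ ∫ _t in a..m, V f a b :=
      intervalIntegral.integral_mono_on ham hIV intervalIntegrable_const hle
    rw [intervalIntegral.integral_const, smul_eq_mul] at this
    have hm2 : m - a = (b - a) / 2 := by rw [hm]; ring
    calc (1 / (b - a)) * (∫ t in a..m, V f t (a + b - t))
        ≤ (1 / (b - a)) * ((m - a) * V f a b) :=
          mul_le_mul_of_nonneg_left this (by positivity)
      _ = (1 / 2) * V f a b := by rw [hm2]; field_simp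
end

section
/- Let f : [a,b] → ℝ be of bounded variation on [a,b], and let p > 1 with 1/p + 1/q = 1. Then (1/(b−a)) ∫_a^{(a+b)/2} V_t^{a+b−t}(f) dt ≤ (1/(b−a)) [V_a^b(f)]^{1/q} · [ p ∫_a^{(a+b)/2} (t−a)^{p−1}·V_t^{a+b−t}(f) dt ]^{1/p} ≤ (1/2)·V_a^b(f). -/
open Set

section Aux
open MeasureTheory intervalIntegral

lemma key1 (a m Vb p : ℝ) (ham : a ≤ m) (hV : 0 < Vb) (hp : 1 < p)
    (g : ℝ → ℝ) (hgi : IntervalIntegrable g volume a m)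
    (hg0 : ∀ t ∈ Icc a m, 0 ≤ g t) (hgV : ∀ t ∈ Icc a m, g t ≤ Vb) :
    (∫ t in a..m, g t) ^ p ≤ Vb ^ (p - 1) * (p * ∫ t in a..m, (t - a) ^ (p - 1) * g t) := by
  have hp0 : (0:ℝ) < p := by linarith
  set I := ∫ t in a..m, g t with hIdef
  have hI0 : 0 ≤ I := integral_nonneg ham hg0
  have hIle : I ≤ Vb * (m - a) := by
    have h := integral_mono_on ham hgi (_root_.intervalIntegrable_const) hgV
    rwa [intervalIntegral.integral_const, smul_eq_mul, mul_comm] at h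
  set c := a + I / Vb with hcdef
  have hca : a ≤ c := le_add_of_nonneg_right (div_nonneg hI0 hV.le)
  have hcm : c ≤ m := by
    have : I / Vb ≤ m - a := by
      rw [div_le_iff₀ hV]
      linarith [hIle]
    simp [hcdef]; linarith
  have hcsub : c - a = I / Vb := by simp [hcdef]
  have hVc : Vb * (c - a) = I := by
    rw [hcsub, mul_div_cancel₀ _ hV.ne']
  have hw_cont : Continuous fun t : ℝ => (t - a) ^ (p - 1) := by
    rw [continuous_iff_continuousAt]
    intro t
    exact (continuousAt_id.sub continuousAt_const).rpow_const (Or.inr (by linarith))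
  set K := (c - a) ^ (p - 1) with hKdef
  have hK0 : 0 ≤ K := Real.rpow_nonneg (by linarith) _
  -- integrabilities
  have hgi_ac : IntervalIntegrable g volume a c :=
    hgi.mono_set (by rw [uIcc_of_le hca, uIcc_of_le ham]; exact Icc_subset_Icc le_rfl hcm)
  have hgi_cm : IntervalIntegrable g volume c m :=
    hgi.mono_set (by rw [uIcc_of_le hcm, uIcc_of_le ham]; exact Icc_subset_Icc hca le_rfl)
  have hwg_ac : IntervalIntegrable (fun t => (t - a) ^ (p - 1) * g t) volume a c :=
    hgi_ac.continuousOn_mul hw_cont.continuousOn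
  have hwg_cm : IntervalIntegrable (fun t => (t - a) ^ (p - 1) * g t) volume c m :=
    hgi_cm.continuousOn_mul hw_cont.continuousOn
  -- value of ∫_a^c w
  have hint : ∫ t in a..c, (t - a) ^ (p - 1) = (c - a) ^ p / p := by
    have h1 : ∫ t in a..c, ((t - a) ^ (p - 1) : ℝ)
        = ∫ u in (a - a)..(c - a), u ^ (p - 1) :=
      integral_comp_sub_right (fun u => u ^ (p - 1)) a
    rw [h1, sub_self, integral_rpow (Or.inl (by linarith)),
      Real.zero_rpow (by linarith : p - 1 + 1 ≠ 0), sub_add_cancel, sub_zero]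
  -- bound A
  have hA : Vb * ((c - a) ^ p / p) - K * (Vb * (c - a) - ∫ t in a..c, g t)
      ≤ ∫ t in a..c, (t - a) ^ (p - 1) * g t := by
    have hpt : ∀ t ∈ Icc a c, Vb * (t - a) ^ (p - 1) - K * (Vb - g t)
        ≤ (t - a) ^ (p - 1) * g t := by
      intro t ht
      have h1 : (t - a) ^ (p - 1) ≤ K :=
        Real.rpow_le_rpow (by linarith [ht.1]) (by linarith [ht.2]) (by linarith)
      have h2 : g t ≤ Vb := hgV t ⟨ht.1, le_trans ht.2 hcm⟩
      have h3 : 0 ≤ (t - a) ^ (p - 1) := Real.rpow_nonneg (by linarith [ht.1]) _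
      nlinarith [mul_nonneg (sub_nonneg.2 h1) (sub_nonneg.2 h2)]
    have hint1 : IntervalIntegrable
        (fun t => Vb * (t - a) ^ (p - 1) - K * (Vb - g t)) volume a c := by
      apply IntervalIntegrable.sub
      · exact ((continuous_const.mul hw_cont).intervalIntegrable a c)
      · exact ((_root_.intervalIntegrable_const).sub hgi_ac).const_mul K
    have h := integral_mono_on hca hint1 hwg_ac hpt
    rw [integral_sub (f := fun t => Vb * (t - a) ^ (p - 1))
        ((continuous_const.mul hw_cont).intervalIntegrable a c)
        (((_root_.intervalIntegrable_const).sub hgi_ac).const_mul K),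
      intervalIntegral.integral_const_mul, intervalIntegral.integral_const_mul,
      integral_sub _root_.intervalIntegrable_const hgi_ac, intervalIntegral.integral_const, smul_eq_mul,
      hint] at h
    convert h using 3
    ring
  -- bound B
  have hB : K * ∫ t in c..m, g t ≤ ∫ t in c..m, (t - a) ^ (p - 1) * g t := by
    rw [← intervalIntegral.integral_const_mul]
    apply integral_mono_on hcm (hgi_cm.const_mul K) hwg_cm
    intro t ht
    have h1 : K ≤ (t - a) ^ (p - 1) :=
      Real.rpow_le_rpow (by linarith) (by linarith [ht.1]) (by linarith)
    exact mul_le_mul_of_nonneg_right h1 (hg0 t ⟨le_trans hca ht.1, ht.2⟩)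
  have hsplit : (∫ t in a..c, (t - a) ^ (p - 1) * g t) + ∫ t in c..m, (t - a) ^ (p - 1) * g t
      = ∫ t in a..m, (t - a) ^ (p - 1) * g t :=
    integral_add_adjacent_intervals hwg_ac hwg_cm
  have hsplitg : (∫ t in a..c, g t) + ∫ t in c..m, g t = I :=
    integral_add_adjacent_intervals hgi_ac hgi_cm
  -- main estimate
  have hmain : Vb * (c - a) ^ p ≤ p * ∫ t in a..m, (t - a) ^ (p - 1) * g t := by
    rw [← hsplit]
    have e1 : Vb * (c - a) - ∫ t in a..c, g t = ∫ t in c..m, g t := by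
      rw [hVc]; linarith [hsplitg]
    rw [e1] at hA
    have := add_le_add hA hB
    have h2 : Vb * ((c - a) ^ p / p) ≤
        (∫ t in a..c, (t - a) ^ (p - 1) * g t) + ∫ t in c..m, (t - a) ^ (p - 1) * g t := by
      linarith
    calc Vb * (c - a) ^ p = p * (Vb * ((c - a) ^ p / p)) := by field_simp
      _ ≤ _ := mul_le_mul_of_nonneg_left h2 hp0.le
  -- conclude
  have hfinal : I ^ p = Vb ^ (p - 1) * (Vb * (c - a) ^ p) := by
    rw [hcsub, Real.div_rpow hI0 hV.le]
    have hVp : Vb ^ p = Vb ^ (p - 1) * Vb := by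
      rw [← Real.rpow_add_one hV.ne' (p - 1), sub_add_cancel]
    rw [hVp]
    have h1 : Vb ^ (p - 1) ≠ 0 := (Real.rpow_pos_of_pos hV _).ne'
    field_simp
  rw [hfinal]
  exact mul_le_mul_of_nonneg_left hmain (Real.rpow_nonneg hV.le _)


lemma key2 (a m Vb p : ℝ) (ham : a ≤ m) (hV : 0 ≤ Vb) (hp : 1 < p)
    (g : ℝ → ℝ) (hgi : IntervalIntegrable g volume a m)
    (hg0 : ∀ t ∈ Icc a m, 0 ≤ g t) (hgV : ∀ t ∈ Icc a m, g t ≤ Vb) :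
    p * ∫ t in a..m, (t - a) ^ (p - 1) * g t ≤ Vb * (m - a) ^ p := by
  have hp0 : (0:ℝ) < p := by linarith
  have hw_cont : Continuous fun t : ℝ => (t - a) ^ (p - 1) := by
    rw [continuous_iff_continuousAt]
    intro t
    exact (continuousAt_id.sub continuousAt_const).rpow_const (Or.inr (by linarith))
  have hwg : IntervalIntegrable (fun t => (t - a) ^ (p - 1) * g t) volume a m :=
    hgi.continuousOn_mul hw_cont.continuousOn
  have hwV : IntervalIntegrable (fun t => (t - a) ^ (p - 1) * Vb) volume a m :=
    (hw_cont.mul continuous_const).intervalIntegrable a m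
  have hmono : ∫ t in a..m, (t - a) ^ (p - 1) * g t ≤ ∫ t in a..m, (t - a) ^ (p - 1) * Vb := by
    apply integral_mono_on ham hwg hwV
    intro t ht
    exact mul_le_mul_of_nonneg_left (hgV t ht) (Real.rpow_nonneg (by linarith [ht.1]) _)
  have hint : ∫ t in a..m, (t - a) ^ (p - 1) = (m - a) ^ p / p := by
    have h1 : ∫ t in a..m, ((t - a) ^ (p - 1) : ℝ)
        = ∫ u in (a - a)..(m - a), u ^ (p - 1) :=
      integral_comp_sub_right (fun u => u ^ (p - 1)) a
    rw [h1, sub_self, integral_rpow (Or.inl (by linarith)),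
      Real.zero_rpow (by linarith : p - 1 + 1 ≠ 0), sub_add_cancel, sub_zero]
  have hintV : ∫ t in a..m, (t - a) ^ (p - 1) * Vb = (m - a) ^ p / p * Vb := by
    rw [← hint, ← intervalIntegral.integral_mul_const]
  calc p * ∫ t in a..m, (t - a) ^ (p - 1) * g t
      ≤ p * ((m - a) ^ p / p * Vb) := by
        rw [← hintV]; exact mul_le_mul_of_nonneg_left hmono hp0.le
    _ = Vb * (m - a) ^ p := by field_simp

end Aux

open MeasureTheory intervalIntegral in
/-- Hölder-type bounds in the refined midpoint inequality. -/
theorem refined_midpoint_holder (a b : ℝ) (hab : a < b) (f : ℝ → ℝ)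
    (hf : BoundedVariationOn f (Icc a b))
    (p q : ℝ) (hp : 1 < p) (hpq : 1 / p + 1 / q = 1) :
    (1 / (b - a)) * (∫ t in a..((a + b) / 2), V f t (a + b - t)) ≤
        (1 / (b - a)) * (V f a b) ^ (1 / q) *
          (p * ∫ t in a..((a + b) / 2), (t - a) ^ (p - 1) * V f t (a + b - t)) ^ (1 / p) ∧
      (1 / (b - a)) * (V f a b) ^ (1 / q) *
          (p * ∫ t in a..((a + b) / 2), (t - a) ^ (p - 1) * V f t (a + b - t)) ^ (1 / p) ≤
        (1 / 2) * V f a b := by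
  have hp0 : (0:ℝ) < p := by linarith
  set m : ℝ := (a + b) / 2 with hm
  have ham : a ≤ m := by rw [hm]; linarith
  set g : ℝ → ℝ := fun t => V f t (a + b - t) with hg
  set Vb : ℝ := V f a b with hVb
  have hVb0 : 0 ≤ Vb := ENNReal.toReal_nonneg
  have hsub : ∀ t ∈ Icc a m, Icc t (a + b - t) ⊆ Icc a b := by
    intro t ht
    exact Icc_subset_Icc ht.1 (by simp only [hm] at ht; linarith [ht.1])
  have hg0 : ∀ t ∈ Icc a m, 0 ≤ g t := fun t _ => ENNReal.toReal_nonneg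
  have hgV : ∀ t ∈ Icc a m, g t ≤ Vb := by
    intro t ht
    exact ENNReal.toReal_mono hf (eVariationOn.mono f (hsub t ht))
  have hganti : AntitoneOn g (Icc a m) := by
    intro s hs t ht hst
    refine ENNReal.toReal_mono (ne_top_of_le_ne_top hf (eVariationOn.mono f (hsub s hs)))
      (eVariationOn.mono f (Icc_subset_Icc hst (by linarith)))
  have hgi : IntervalIntegrable g volume a m := by
    apply AntitoneOn.intervalIntegrable
    rwa [uIcc_of_le ham]
  have hba : (0:ℝ) < b - a := by linarith
  set X : ℝ := p * ∫ t in a..m, (t - a) ^ (p - 1) * g t with hX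
  have hX0 : 0 ≤ X := by
    apply mul_nonneg hp0.le
    apply integral_nonneg ham
    intro u hu
    exact mul_nonneg (Real.rpow_nonneg (by linarith [hu.1]) _) (hg0 u hu)
  have hq' : 1 / q = (p - 1) / p := by
    have h1 : (p - 1) / p = 1 - 1 / p := by field_simp
    linarith
  set I : ℝ := ∫ t in a..m, g t with hI
  have hI0 : 0 ≤ I := integral_nonneg ham hg0
  constructor
  · -- first inequality
    rcases eq_or_lt_of_le hVb0 with hV0 | hVpos
    · -- Vb = 0 : I = 0, RHS nonneg
      have hIz : I = 0 := by
        rw [hI]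
        rw [integral_congr (g := fun _ => (0:ℝ))]
        · simp
        · intro t ht
          rw [uIcc_of_le ham] at ht
          exact le_antisymm (by rw [← hV0] at hgV; exact hgV t ht) (hg0 t ht)
      rw [hIz, mul_zero]
      have : (0:ℝ) ≤ 1 / (b - a) * Vb ^ (1 / q) * X ^ (1 / p) := by
        apply mul_nonneg (mul_nonneg (by positivity) (Real.rpow_nonneg hVb0 _))
          (Real.rpow_nonneg hX0 _)
      exact this
    · have hkey := key1 a m Vb p ham hVpos hp g hgi hg0 hgV
      have hmain : I ≤ Vb ^ (1 / q) * X ^ (1 / p) := by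
        calc I = (I ^ p) ^ p⁻¹ := (Real.rpow_rpow_inv hI0 hp0.ne').symm
          _ ≤ (Vb ^ (p - 1) * X) ^ p⁻¹ := by
              apply Real.rpow_le_rpow (Real.rpow_nonneg hI0 _) hkey (by positivity)
          _ = (Vb ^ (p - 1)) ^ p⁻¹ * X ^ p⁻¹ :=
              Real.mul_rpow (Real.rpow_nonneg hVb0 _) hX0
          _ = Vb ^ (1 / q) * X ^ (1 / p) := by
              rw [← Real.rpow_mul hVb0, hq', div_eq_mul_inv, one_div]
      calc 1 / (b - a) * I ≤ 1 / (b - a) * (Vb ^ (1 / q) * X ^ (1 / p)) :=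
            mul_le_mul_of_nonneg_left hmain (by positivity)
        _ = _ := by ring
  · -- second inequality
    have hk2 := key2 a m Vb p ham hVb0 hp g hgi hg0 hgV
    have hma : m - a = (b - a) / 2 := by rw [hm]; ring
    rw [hma] at hk2
    rw [← hX] at hk2
    have hXle : X ^ (1 / p) ≤ Vb ^ (1 / p) * ((b - a) / 2) := by
      calc X ^ (1 / p) ≤ (Vb * ((b - a) / 2) ^ p) ^ (1 / p) :=
            Real.rpow_le_rpow hX0 hk2 (by positivity)
        _ = Vb ^ (1 / p) * ((b - a) / 2) := by
            rw [Real.mul_rpow hVb0 (Real.rpow_nonneg (by linarith) _), one_div,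
              Real.rpow_rpow_inv (by linarith) hp0.ne']
    have hqp1 : 1 / q + 1 / p = 1 := by linarith
    have hVqp : Vb ^ (1 / q) * Vb ^ (1 / p) = Vb := by
      rw [← Real.rpow_add' hVb0 (by rw [hqp1]; norm_num), hqp1, Real.rpow_one]
    calc 1 / (b - a) * Vb ^ (1 / q) * X ^ (1 / p)
        ≤ 1 / (b - a) * Vb ^ (1 / q) * (Vb ^ (1 / p) * ((b - a) / 2)) := by
          apply mul_le_mul_of_nonneg_left hXle
          exact mul_nonneg (by positivity) (Real.rpow_nonneg hVb0 _)
      _ = (Vb ^ (1 / q) * Vb ^ (1 / p)) * ((b - a) / 2) * (1 / (b - a)) := by ring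
      _ = 1 / 2 * Vb := by rw [hVqp]; field_simp
end

section
/- Let f : [a,b] → ℝ be of bounded variation on [a,b] and symmetric about the line x = (a+b)/2, i.e., f(a+b−x) = f(x) for all x ∈ [a,b]. Then |f(a) − (1/(b−a))∫_a^b f(t) dt| ≤ (1/2)·V_a^b(f) − (1/(b−a)) ∫_a^{(a+b)/2} V_t^{a+b−t}(f) dt ≤ (1/2)·V_a^b(f). -/
open Set

/-- Refined inequality at the endpoint for symmetric functions of bounded variation. -/
theorem ostrowski_symmetric_endpoint_bv (a b : ℝ) (hab : a < b) (f : ℝ → ℝ)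
    (hf : BoundedVariationOn f (Icc a b))
    (hsym : ∀ x ∈ Icc a b, f (a + b - x) = f x) :
    |f a - (1 / (b - a)) * ∫ t in a..b, f t| ≤
        (1 / 2) * V f a b - (1 / (b - a)) * ∫ t in a..((a + b) / 2), V f t (a + b - t) ∧
      (1 / 2) * V f a b - (1 / (b - a)) * (∫ t in a..((a + b) / 2), V f t (a + b - t)) ≤
        (1 / 2) * V f a b := by
  set m : ℝ := (a + b) / 2 with hm
  have ham : a ≤ m := by rw [hm]; linarith
  have hmb : m ≤ b := by rw [hm]; linarith
  have hba : (0:ℝ) < b - a := by linarith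
  -- finiteness of variation on subintervals
  have hsub : ∀ {c d : ℝ}, Icc c d ⊆ Icc a b → eVariationOn f (Icc c d) ≠ ⊤ :=
    fun {c d} h => ne_top_of_le_ne_top hf (eVariationOn.mono f h)
  -- f is a difference of monotone functions, hence interval integrable on [a, b]
  obtain ⟨p, q, hp, hq, hpq⟩ :=
    hf.locallyBoundedVariationOn.exists_monotoneOn_sub_monotoneOn
  have hIcc : uIcc a b = Icc a b := uIcc_of_le hab.le
  have hfi : IntervalIntegrable f MeasureTheory.volume a b := by
    rw [hpq]
    exact IntervalIntegrable.sub ((hp.mono (by rw [hIcc])).intervalIntegrable)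
      ((hq.mono (by rw [hIcc])).intervalIntegrable)
  have hfim : IntervalIntegrable f MeasureTheory.volume a m := by
    have hsubm : uIcc a m ⊆ Icc a b := by
      rw [uIcc_of_le ham]; exact Icc_subset_Icc le_rfl hmb
    rw [hpq]
    exact IntervalIntegrable.sub ((hp.mono hsubm).intervalIntegrable)
      ((hq.mono hsubm).intervalIntegrable)
  -- the variation function t ↦ V f t (a+b-t) is antitone on [a, m]
  have hVanti : AntitoneOn (fun t => V f t (a + b - t)) (Icc a m) := by
    intro x hx y hy hxy
    have h1 : Icc y (a + b - y) ⊆ Icc x (a + b - x) :=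
      Icc_subset_Icc hxy (by linarith)
    have h2 : Icc x (a + b - x) ⊆ Icc a b := by
      have := hx.1
      exact Icc_subset_Icc hx.1 (by linarith)
    exact ENNReal.toReal_mono (hsub h2) (eVariationOn.mono f h1)
  have hVi : IntervalIntegrable (fun t => V f t (a + b - t)) MeasureTheory.volume a m := by
    apply AntitoneOn.intervalIntegrable
    rwa [uIcc_of_le ham]
  -- nonnegativity of the integral of V
  have hVint_nonneg : 0 ≤ ∫ t in a..m, V f t (a + b - t) := by
    apply intervalIntegral.integral_nonneg ham
    intro u _
    exact ENNReal.toReal_nonneg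
  constructor
  swap
  · have : 0 ≤ (1 / (b - a)) * ∫ t in a..m, V f t (a + b - t) :=
      mul_nonneg (by positivity) hVint_nonneg
    linarith
  -- key pointwise bound : for t in [a, m], 2 |f a - f t| ≤ V f a b - V f t (a+b-t)
  have hfb : f b = f a := by
    have := hsym a ⟨le_rfl, hab.le⟩
    simpa using this
  have key : ∀ t ∈ Icc a m, |f a - f t| ≤ (1/2) * (V f a b - V f t (a + b - t)) := by
    intro t ht
    have hta : a ≤ t := ht.1
    have htm : t ≤ m := ht.2
    have h1 : t ≤ a + b - t := by rw [hm] at htm; linarith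
    have h2 : a + b - t ≤ b := by linarith
    have htb : t ≤ b := by linarith
    -- decomposition of variation
    have hadd1 : eVariationOn f (Icc a t) + eVariationOn f (Icc t (a + b - t))
        = eVariationOn f (Icc a (a + b - t)) := by
      have := eVariationOn.Icc_add_Icc f (s := Icc a (a + b - t)) hta h1
        ⟨hta, h1⟩
      rw [inter_eq_self_of_subset_right (Icc_subset_Icc le_rfl h1),
        inter_eq_self_of_subset_right (Icc_subset_Icc hta le_rfl),
        inter_self] at this
      exact this
    have hadd2 : eVariationOn f (Icc a (a + b - t)) + eVariationOn f (Icc (a + b - t) b)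
        = eVariationOn f (Icc a b) := by
      have := eVariationOn.Icc_add_Icc f (s := Icc a b) (by linarith : a ≤ a + b - t) h2
        ⟨by linarith, h2⟩
      rw [inter_eq_self_of_subset_right (Icc_subset_Icc le_rfl h2),
        inter_eq_self_of_subset_right (Icc_subset_Icc (by linarith) le_rfl),
        inter_self] at this
      exact this
    have hne1 : eVariationOn f (Icc a t) ≠ ⊤ := hsub (Icc_subset_Icc le_rfl htb)
    have hne2 : eVariationOn f (Icc t (a + b - t)) ≠ ⊤ := hsub (Icc_subset_Icc hta h2)
    have hne3 : eVariationOn f (Icc (a + b - t) b) ≠ ⊤ :=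
      hsub (Icc_subset_Icc (by linarith) le_rfl)
    have hne4 : eVariationOn f (Icc a (a + b - t)) ≠ ⊤ := hsub (Icc_subset_Icc le_rfl h2)
    -- real-valued decomposition
    have hrsum : V f a t + V f t (a + b - t) + V f (a + b - t) b = V f a b := by
      unfold V
      rw [← ENNReal.toReal_add hne1 hne2, hadd1, ← ENNReal.toReal_add hne4 hne3, hadd2]
    -- |f a - f t| ≤ V f a t
    have hb1 : |f a - f t| ≤ V f a t := by
      have h := eVariationOn.edist_le f (show a ∈ Icc a t from ⟨le_rfl, hta⟩)
        (show t ∈ Icc a t from ⟨hta, le_rfl⟩)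
      have := ENNReal.toReal_mono hne1 h
      rwa [edist_dist, ENNReal.toReal_ofReal dist_nonneg, Real.dist_eq] at this
    -- |f a - f t| ≤ V f (a+b-t) b
    have hb2 : |f a - f t| ≤ V f (a + b - t) b := by
      have hft : f (a + b - t) = f t := hsym t ⟨hta, htb⟩
      have h := eVariationOn.edist_le f
        (show a + b - t ∈ Icc (a + b - t) b from ⟨le_rfl, h2⟩)
        (show b ∈ Icc (a + b - t) b from ⟨h2, le_rfl⟩)
      have h' := ENNReal.toReal_mono hne3 h
      rw [edist_dist, ENNReal.toReal_ofReal dist_nonneg, Real.dist_eq, hft, hfb] at h'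
      rwa [abs_sub_comm]
    have hVnn : 0 ≤ V f t (a + b - t) := ENNReal.toReal_nonneg
    have hVnn3 : 0 ≤ V f (a + b - t) b := ENNReal.toReal_nonneg
    nlinarith [hb1, hb2]
  -- symmetry of the integral : ∫ a..b f = 2 * ∫ a..m f
  have hsymint : ∫ t in a..b, f t = 2 * ∫ t in a..m, f t := by
    have hfimb : IntervalIntegrable f MeasureTheory.volume m b := by
      apply hfi.mono_set
      rw [uIcc_of_le hmb, hIcc]
      exact Icc_subset_Icc ham le_rfl
    have hsplit : (∫ t in a..m, f t) + ∫ t in m..b, f t = ∫ t in a..b, f t :=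
      intervalIntegral.integral_add_adjacent_intervals hfim hfimb
    have hcomp : (∫ t in a..m, f (a + b - t)) = ∫ t in m..b, f t := by
      have e1 : a + b - m = m := by rw [hm]; ring
      have e2 : a + b - a = b := by ring
      rw [intervalIntegral.integral_comp_sub_left f (a + b), e1, e2]
    have hcongr : (∫ t in a..m, f (a + b - t)) = ∫ t in a..m, f t := by
      apply intervalIntegral.integral_congr
      intro x hx
      rw [uIcc_of_le ham] at hx
      exact hsym x ⟨hx.1, hx.2.trans hmb⟩
    have : ∫ t in m..b, f t = ∫ t in a..m, f t := by rw [← hcomp, hcongr]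
    linarith
  -- rewrite f a - average as an integral over [a, m]
  have hconst : IntervalIntegrable (fun _ : ℝ => f a) MeasureTheory.volume a m :=
    intervalIntegrable_const
  have hdiff : f a - (1 / (b - a)) * ∫ t in a..b, f t
      = (2 / (b - a)) * ∫ t in a..m, (f a - f t) := by
    rw [intervalIntegral.integral_sub hconst hfim, intervalIntegral.integral_const, hsymint]
    have hma : m - a = (b - a) / 2 := by rw [hm]; ring
    rw [hma]
    field_simp
    ring
  -- final computation
  have habs : |f a - (1 / (b - a)) * ∫ t in a..b, f t|
      ≤ (2 / (b - a)) * ∫ t in a..m, |f a - f t| := by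
    rw [hdiff, abs_mul, abs_of_nonneg (by positivity : (0:ℝ) ≤ 2 / (b - a))]
    gcongr
    exact intervalIntegral.abs_integral_le_integral_abs ham
  have hmono : (∫ t in a..m, |f a - f t|)
      ≤ ∫ t in a..m, (1/2) * (V f a b - V f t (a + b - t)) := by
    apply intervalIntegral.integral_mono_on ham
    · exact (hconst.sub hfim).abs
    · exact (intervalIntegrable_const.sub hVi).const_mul _
    · exact key
  have hcalc : (2 / (b - a)) * ∫ t in a..m, (1/2) * (V f a b - V f t (a + b - t))
      = (1/2) * V f a b - (1 / (b - a)) * ∫ t in a..m, V f t (a + b - t) := by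
    rw [intervalIntegral.integral_const_mul,
      intervalIntegral.integral_sub intervalIntegrable_const hVi,
      intervalIntegral.integral_const]
    have hma : m - a = (b - a) / 2 := by rw [hm]; ring
    rw [hma]
    field_simp
    ring
  calc |f a - (1 / (b - a)) * ∫ t in a..b, f t|
      ≤ (2 / (b - a)) * ∫ t in a..m, |f a - f t| := habs
    _ ≤ (2 / (b - a)) * ∫ t in a..m, (1/2) * (V f a b - V f t (a + b - t)) := by
        gcongr
    _ = (1/2) * V f a b - (1 / (b - a)) * ∫ t in a..m, V f t (a + b - t) := hcalc
end

section
/- Let X be a random variable taking values in [a,b] with probability density function f : [a,b] → [0,1] and cumulative distribution function F(x) = ∫_a^x f(t) dt, and let E(X) = ∫_a^b t f(t) dt be the expectation of X. Then for all x ∈ [a,(a+b)/2], | (F(x) + F(a+b−x))/2 − (b − E(X))/(b−a) | ≤ T(x), where T(x) := (1/(b−a)) [ 2((3a+b)/4 − x)·(F(a+b−x) − F(x)) + ∫_a^{(a+b)/2} sgn(x−t)·(F(a+b−t) − F(t)) dt ]. -/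
open Set MeasureTheory

lemma sign_meas (x : ℝ) : Measurable fun t : ℝ => Real.sign (x - t) := by
  have : Measurable fun t : ℝ => x - t := measurable_const.sub measurable_id
  unfold Real.sign
  exact Measurable.ite (measurableSet_lt this measurable_const) measurable_const
    (Measurable.ite (measurableSet_lt measurable_const this) measurable_const measurable_const)

lemma abs_sign_le (y : ℝ) : |Real.sign y| ≤ 1 := by
  rcases lt_trichotomy y 0 with h | h | h
  · rw [Real.sign_of_neg h]; norm_num
  · simp [h]
  · rw [Real.sign_of_pos h]; norm_num

lemma sign_II (x c d : ℝ) : IntervalIntegrable (fun t => Real.sign (x - t)) volume c d := by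
  rw [intervalIntegrable_iff]
  refine Integrable.mono' (g := fun _ => (1:ℝ)) ?_ ((sign_meas x).aestronglyMeasurable) ?_
  · exact integrableOn_const measure_Ioc_lt_top.ne
  · exact Filter.Eventually.of_forall fun t => abs_sign_le _

lemma sign_int {a m x : ℝ} (hax : a ≤ x) (hxm : x ≤ m) :
    (∫ t in a..m, Real.sign (x - t)) = (x - a) - (m - x) := by
  have h1 : (∫ t in a..x, Real.sign (x - t)) = x - a := by
    have hne : ∀ᵐ t : ℝ, t ≠ x := by
      rw [MeasureTheory.ae_iff]
      simpa using measure_singleton x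
    rw [show x - a = ∫ t in a..x, (1:ℝ) by simp]
    refine intervalIntegral.integral_congr_ae ?_
    filter_upwards [hne] with t ht hti
    rw [uIoc_of_le hax] at hti
    exact Real.sign_of_pos (by cases hti.2.lt_or_eq with
      | inl h => linarith
      | inr h => exact absurd h ht)
  have h2 : (∫ t in x..m, Real.sign (x - t)) = -(m - x) := by
    rw [show -(m - x) = ∫ t in x..m, (-1:ℝ) by simp]
    refine intervalIntegral.integral_congr_ae (Filter.Eventually.of_forall fun t hti => ?_)
    rw [uIoc_of_le hxm] at hti
    exact Real.sign_of_neg (by linarith [hti.1])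
  rw [← intervalIntegral.integral_add_adjacent_intervals (sign_II x a x) (sign_II x x m), h1, h2]
  ring

lemma primitive_integral {a b : ℝ} (hab : a ≤ b) {f : ℝ → ℝ}
    (hint : IntegrableOn f (Icc a b)) :
    (∫ t in a..b, ∫ s in a..t, f s) = ∫ s in a..b, (b - s) * f s := by
  set μ := volume.restrict (Ioc a b) with hμ
  have hfμ : Integrable f μ := hint.mono_set Ioc_subset_Icc_self
  set S : Set (ℝ × ℝ) := {p | p.1 ≤ p.2} with hSdef
  have hS : MeasurableSet S := measurableSet_le measurable_fst measurable_snd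
  have hprod : Integrable (fun p : ℝ × ℝ => f p.1) (μ.prod μ) := by
    have h1 : Integrable (fun _ : ℝ => (1:ℝ)) μ :=
      integrableOn_const measure_Ioc_lt_top.ne
    simpa using hfμ.mul_prod h1
  have hg : Integrable (S.indicator fun p : ℝ × ℝ => f p.1) (μ.prod μ) := hprod.indicator hS
  set k : ℝ → ℝ → ℝ := fun s t => if s ≤ t then f s else 0 with hk
  have hunc : Function.uncurry k = S.indicator fun p : ℝ × ℝ => f p.1 := by
    funext p
    by_cases h : p.1 ≤ p.2 <;> simp [hk, Function.uncurry, Set.indicator, hSdef, h]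
  have hswap : (∫ s, ∫ t, k s t ∂μ ∂μ) = ∫ t, ∫ s, k s t ∂μ ∂μ := by
    exact integral_integral_swap (by rw [hunc]; exact hg)
  have hL : (∫ s, ∫ t, k s t ∂μ ∂μ) = ∫ s in Ioc a b, (b - s) * f s := by
    rw [hμ]
    refine setIntegral_congr_fun measurableSet_Ioc fun s hs => ?_
    have : (fun t => k s t) = (Ici s).indicator (fun _ => f s) := by
      funext t; by_cases h : s ≤ t <;> simp [hk, Set.indicator, h]
    rw [this, ← hμ, integral_indicator_const _ measurableSet_Ici, hμ,
      measureReal_def, Measure.restrict_apply measurableSet_Ici]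
    have : Ici s ∩ Ioc a b = Icc s b := by
      ext t; simp only [mem_inter_iff, mem_Ici, mem_Ioc, mem_Icc]
      constructor
      · rintro ⟨h1, _, h3⟩; exact ⟨h1, h3⟩
      · rintro ⟨h1, h2⟩; exact ⟨h1, lt_of_lt_of_le hs.1 h1, h2⟩
    rw [this, Real.volume_Icc, smul_eq_mul, ENNReal.toReal_ofReal (by linarith [hs.2])]
  have hR : (∫ t, ∫ s, k s t ∂μ ∂μ) = ∫ t in Ioc a b, ∫ s in a..t, f s := by
    rw [hμ]
    refine setIntegral_congr_fun measurableSet_Ioc fun t ht => ?_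
    have : (fun s => k s t) = (Iic t).indicator f := by
      funext s; by_cases h : s ≤ t <;> simp [hk, Set.indicator, h]
    rw [this, ← hμ, integral_indicator measurableSet_Iic, hμ,
      Measure.restrict_restrict measurableSet_Iic]
    have h2 : Iic t ∩ Ioc a b = Ioc a t := by
      ext s; simp only [mem_inter_iff, mem_Iic, mem_Ioc]
      constructor
      · rintro ⟨h1, h2, _⟩; exact ⟨h2, h1⟩
      · rintro ⟨h1, h2⟩; exact ⟨h2, h1, h2.trans ht.2⟩
    rw [h2, intervalIntegral.integral_of_le ht.1.le]
  rw [intervalIntegral.integral_of_le hab, intervalIntegral.integral_of_le hab, ← hL, hswap, hR]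

/-- Inequality for cumulative distribution functions: the refined bound `T(x)`. -/
theorem cdf_refined_companion_ostrowski (a b : ℝ) (hab : a < b) (f F : ℝ → ℝ)
    (hint : IntegrableOn f (Icc a b))
    (h0 : ∀ t ∈ Icc a b, 0 ≤ f t) (h1 : ∀ t ∈ Icc a b, f t ≤ 1)
    (hprob : (∫ t in a..b, f t) = 1)
    (hF : ∀ x ∈ Icc a b, F x = ∫ t in a..x, f t) :
    ∀ x ∈ Icc a ((a + b) / 2),
      |(F x + F (a + b - x)) / 2 - (b - ∫ t in a..b, t * f t) / (b - a)| ≤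
        (1 / (b - a)) * (2 * ((3 * a + b) / 4 - x) * (F (a + b - x) - F x)
          + ∫ t in a..((a + b) / 2), Real.sign (x - t) * (F (a + b - t) - F t)) := by
  intro x hx
  have hab' : a ≤ b := hab.le
  set m : ℝ := (a + b) / 2 with hmdef
  have ham : a ≤ m := by rw [hmdef]; linarith
  have hmb : m ≤ b := by rw [hmdef]; linarith
  have hax : a ≤ x := hx.1
  have hxm : x ≤ m := hx.2
  have hxb : x ≤ b := hxm.trans hmb
  set F0 : ℝ → ℝ := fun t => ∫ s in a..t, f s with hF0def
  have hfi : IntervalIntegrable f volume a b := by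
    apply IntegrableOn.intervalIntegrable
    rwa [uIcc_of_le hab']
  have hfi' : ∀ c ∈ Icc a b, ∀ d ∈ Icc a b, IntervalIntegrable f volume c d := by
    intro c hc d hd
    refine hfi.mono_set ?_
    have hc' : c ∈ uIcc a b := by rwa [uIcc_of_le hab']
    have hd' : d ∈ uIcc a b := by rwa [uIcc_of_le hab']
    exact uIcc_subset_uIcc hc' hd'
  have hF0c : ContinuousOn F0 (Icc a b) := by
    have := intervalIntegral.continuousOn_primitive_interval (a := a) (b := b)
      (f := f) (μ := volume) (by rwa [uIcc_of_le hab'])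
    rwa [uIcc_of_le hab'] at this
  have hmem : ∀ t ∈ Icc a m, (a + b - t) ∈ Icc a b := by
    intro t ht
    have h1 := ht.1
    have h2 := ht.2
    rw [hmdef] at h2
    constructor <;> [linarith; linarith]
  set G : ℝ → ℝ := fun t => F0 (a + b - t) - F0 t with hGdef
  set H : ℝ → ℝ := fun t => F0 t + F0 (a + b - t) with hHdef
  have hsubm : Icc a m ⊆ Icc a b := Icc_subset_Icc_right hmb
  have hcomp : ContinuousOn (fun t => F0 (a + b - t)) (Icc a m) := by
    refine ContinuousOn.comp hF0c ((continuous_const.sub continuous_id).continuousOn) ?_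
    intro t ht
    exact hmem t ht
  have hHc : ContinuousOn H (Icc a m) := ((hF0c.mono hsubm).add hcomp)
  have hGc : ContinuousOn G (Icc a m) := (hcomp.sub (hF0c.mono hsubm))
  have hHI : IntervalIntegrable H volume a m := by
    apply ContinuousOn.intervalIntegrable
    rwa [uIcc_of_le ham]
  have hGI : IntervalIntegrable G volume a m := by
    apply ContinuousOn.intervalIntegrable
    rwa [uIcc_of_le ham]
  have habsHI : IntervalIntegrable (fun t => |H x - H t|) volume a m := by
    apply ContinuousOn.intervalIntegrable
    rw [uIcc_of_le ham]
    exact (continuousOn_const.sub hHc).abs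
  have hsgnGI : IntervalIntegrable (fun t => Real.sign (x - t) * G t) volume a m := by
    obtain ⟨C, hC⟩ := isCompact_Icc.exists_bound_of_continuousOn hGc
    rw [intervalIntegrable_iff, uIoc_of_le ham]
    refine Integrable.mono' (g := fun _ => C) ((integrableOn_const
      measure_Ioc_lt_top.ne)) ?_ ?_
    · exact ((sign_meas x).aestronglyMeasurable).mul
        ((hGc.mono Ioc_subset_Icc_self).aestronglyMeasurable measurableSet_Ioc)
    · rw [ae_restrict_iff' measurableSet_Ioc]
      refine Filter.Eventually.of_forall fun t ht => ?_
      have h1 : ‖Real.sign (x - t) * G t‖ = |Real.sign (x - t)| * |G t| := abs_mul _ _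
      rw [h1]
      calc |Real.sign (x - t)| * |G t| ≤ 1 * |G t| :=
            mul_le_mul_of_nonneg_right (abs_sign_le _) (abs_nonneg _)
        _ = ‖G t‖ := by rw [one_mul]; rfl
        _ ≤ C := hC t (Ioc_subset_Icc_self ht)
  have hsgnGxI : IntervalIntegrable (fun t => Real.sign (x - t) * G x) volume a m :=
    (sign_II x a m).mul_const (G x)
  have hsgnGGI : IntervalIntegrable (fun t => Real.sign (x - t) * (G t - G x)) volume a m := by
    have : (fun t => Real.sign (x - t) * (G t - G x)) =
        fun t => Real.sign (x - t) * G t - Real.sign (x - t) * G x := by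
      funext t; ring
    rw [this]
    exact hsgnGI.sub hsgnGxI
  -- Step A : b - E = ∫ F0 over a..b
  have hmulI : IntervalIntegrable (fun s => s * f s) volume a b :=
    hfi.continuousOn_mul continuous_id.continuousOn
  have hA : b - (∫ t in a..b, t * f t) = ∫ t in a..b, F0 t := by
    have hP := primitive_integral hab' hint
    have : (∫ s in a..b, (b - s) * f s) = b * (∫ s in a..b, f s) - ∫ s in a..b, s * f s := by
      rw [← intervalIntegral.integral_const_mul, ← intervalIntegral.integral_sub
        (hfi.const_mul b) hmulI]
      congr 1
      funext s
      ring
    rw [hF0def, hP, this, hprob]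
    ring
  -- Step B : ∫ F0 over a..b = ∫ H over a..m
  have hF0Iam : IntervalIntegrable F0 volume a m := by
    apply ContinuousOn.intervalIntegrable
    rw [uIcc_of_le ham]
    exact hF0c.mono hsubm
  have hF0Imb : IntervalIntegrable F0 volume m b := by
    apply ContinuousOn.intervalIntegrable
    rw [uIcc_of_le hmb]
    exact hF0c.mono (Icc_subset_Icc_left ham)
  have hcompI : IntervalIntegrable (fun t => F0 (a + b - t)) volume a m := by
    apply ContinuousOn.intervalIntegrable
    rwa [uIcc_of_le ham]
  have hB : (∫ t in a..b, F0 t) = ∫ t in a..m, H t := by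
    have hsplit := intervalIntegral.integral_add_adjacent_intervals hF0Iam hF0Imb
    have hcs : (∫ t in a..m, F0 (a + b - t)) = ∫ t in m..b, F0 t := by
      rw [intervalIntegral.integral_comp_sub_left F0 (a + b),
        show a + b - m = m by rw [hmdef]; ring, show a + b - a = b by ring]
    rw [hHdef, intervalIntegral.integral_add hF0Iam hcompI, hcs, hsplit]
  -- Step C
  have hbne : b - a ≠ 0 := by linarith
  have hxab : x ∈ Icc a b := ⟨hax, hxb⟩
  have hFx : F x = F0 x := hF x hxab
  have hFy : F (a + b - x) = F0 (a + b - x) := hF _ (hmem x hx)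
  have hC : (F x + F (a + b - x)) / 2 - (b - ∫ t in a..b, t * f t) / (b - a) =
      (1 / (b - a)) * ∫ t in a..m, (H x - H t) := by
    rw [hA, hB, hFx, hFy,
      intervalIntegral.integral_sub intervalIntegrable_const hHI,
      intervalIntegral.integral_const]
    have hHx : H x = F0 x + F0 (a + b - x) := rfl
    rw [← hHx, smul_eq_mul, show m - a = (b - a) / 2 by rw [hmdef]; ring]
    field_simp
  -- Step D
  have hGx : F (a + b - x) - F x = G x := by rw [hFx, hFy]
  have hcongrD : (∫ t in a..m, Real.sign (x - t) * (F (a + b - t) - F t)) =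
      ∫ t in a..m, Real.sign (x - t) * G t := by
    refine intervalIntegral.integral_congr ?_
    intro t ht
    rw [uIcc_of_le ham] at ht
    show Real.sign (x - t) * (F (a + b - t) - F t) = Real.sign (x - t) * G t
    rw [hF t (hsubm ht), hF _ (hmem t ht)]
  have hD : (1 / (b - a)) * (2 * ((3 * a + b) / 4 - x) * (F (a + b - x) - F x)
      + ∫ t in a..m, Real.sign (x - t) * (F (a + b - t) - F t)) =
      (1 / (b - a)) * ∫ t in a..m, Real.sign (x - t) * (G t - G x) := by
    rw [hGx, hcongrD]
    have hlin : (∫ t in a..m, Real.sign (x - t) * (G t - G x)) =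
        (∫ t in a..m, Real.sign (x - t) * G t) -
          (∫ t in a..m, Real.sign (x - t)) * G x := by
      have he : (fun t => Real.sign (x - t) * (G t - G x)) =
          fun t => Real.sign (x - t) * G t - Real.sign (x - t) * G x := by
        funext t; ring
      rw [he, intervalIntegral.integral_sub hsgnGI hsgnGxI,
        intervalIntegral.integral_mul_const]
    rw [hlin, sign_int hax hxm]
    have : m = (a + b) / 2 := hmdef
    congr 1
    rw [this]
    ring
  -- Step E : pointwise bound
  have hpt : ∀ t ∈ Icc a m, |H x - H t| ≤ Real.sign (x - t) * (G t - G x) := by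
    intro t ht
    have htb : t ∈ Icc a b := hsubm ht
    have hmt : (a + b - t) ∈ Icc a b := hmem t ht
    have hmx : (a + b - x) ∈ Icc a b := hmem x hx
    have hHxt : H x - H t = (∫ s in t..x, f s) - ∫ s in (a + b - x)..(a + b - t), f s := by
      have e1 : F0 x - F0 t = ∫ s in t..x, f s :=
        intervalIntegral.integral_interval_sub_left (hfi' a ⟨le_refl a, hab'⟩ x hxab)
          (hfi' a ⟨le_refl a, hab'⟩ t htb)
      have e2 : F0 (a + b - x) - F0 (a + b - t) = ∫ s in (a + b - t)..(a + b - x), f s :=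
        intervalIntegral.integral_interval_sub_left (hfi' a ⟨le_refl a, hab'⟩ _ hmx)
          (hfi' a ⟨le_refl a, hab'⟩ _ hmt)
      have : H x - H t = (F0 x - F0 t) + (F0 (a + b - x) - F0 (a + b - t)) := by
        rw [hHdef]; ring
      rw [this, e1, e2, intervalIntegral.integral_symm (a + b - x) (a + b - t)]
      ring
    have hGtx : G t - G x = (∫ s in (a + b - x)..(a + b - t), f s) + ∫ s in t..x, f s := by
      have e1 : F0 x - F0 t = ∫ s in t..x, f s :=
        intervalIntegral.integral_interval_sub_left (hfi' a ⟨le_refl a, hab'⟩ x hxab)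
          (hfi' a ⟨le_refl a, hab'⟩ t htb)
      have e2 : F0 (a + b - t) - F0 (a + b - x) = ∫ s in (a + b - x)..(a + b - t), f s :=
        intervalIntegral.integral_interval_sub_left (hfi' a ⟨le_refl a, hab'⟩ _ hmt)
          (hfi' a ⟨le_refl a, hab'⟩ _ hmx)
      have : G t - G x = (F0 (a + b - t) - F0 (a + b - x)) + (F0 x - F0 t) := by
        rw [hGdef]; ring
      rw [this, e1, e2]
    rcases lt_trichotomy t x with hlt | heq | hgt
    · have hA1 : 0 ≤ ∫ s in t..x, f s :=
        intervalIntegral.integral_nonneg hlt.le fun u hu =>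
          h0 u ⟨le_trans htb.1 hu.1, le_trans hu.2 hxb⟩
      have hB1 : 0 ≤ ∫ s in (a + b - x)..(a + b - t), f s :=
        intervalIntegral.integral_nonneg (by linarith) fun u hu =>
          h0 u ⟨le_trans hmx.1 hu.1, le_trans hu.2 hmt.2⟩
      rw [hHxt, hGtx, Real.sign_of_pos (by linarith : (0:ℝ) < x - t), one_mul]
      calc |(∫ s in t..x, f s) - ∫ s in (a + b - x)..(a + b - t), f s|
          ≤ |∫ s in t..x, f s| + |∫ s in (a + b - x)..(a + b - t), f s| := abs_sub _ _
        _ = (∫ s in (a + b - x)..(a + b - t), f s) + ∫ s in t..x, f s := by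
            rw [abs_of_nonneg hA1, abs_of_nonneg hB1]; ring
    · subst heq
      simp [Real.sign_zero]
    · have hA1 : (∫ s in t..x, f s) ≤ 0 := by
        rw [intervalIntegral.integral_symm]
        simp only [neg_nonpos]
        exact intervalIntegral.integral_nonneg hgt.le fun u hu =>
          h0 u ⟨le_trans hax hu.1, le_trans hu.2 htb.2⟩
      have hB1 : (∫ s in (a + b - x)..(a + b - t), f s) ≤ 0 := by
        rw [intervalIntegral.integral_symm]
        simp only [neg_nonpos]
        exact intervalIntegral.integral_nonneg (by linarith) fun u hu =>
          h0 u ⟨le_trans hmt.1 hu.1, le_trans hu.2 hmx.2⟩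
      rw [hHxt, hGtx, Real.sign_of_neg (by linarith : x - t < 0)]
      calc |(∫ s in t..x, f s) - ∫ s in (a + b - x)..(a + b - t), f s|
          ≤ |∫ s in t..x, f s| + |∫ s in (a + b - x)..(a + b - t), f s| := abs_sub _ _
        _ = -1 * ((∫ s in (a + b - x)..(a + b - t), f s) + ∫ s in t..x, f s) := by
            rw [abs_of_nonpos hA1, abs_of_nonpos hB1]; ring
  -- final assembly
  have hinv : (0:ℝ) ≤ 1 / (b - a) := by
    have hba : (0:ℝ) < b - a := by linarith
    positivity
  rw [hC, hD]
  rw [abs_mul, abs_of_nonneg hinv]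
  refine mul_le_mul_of_nonneg_left ?_ hinv
  calc |∫ t in a..m, (H x - H t)| ≤ ∫ t in a..m, |H x - H t| :=
        intervalIntegral.abs_integral_le_integral_abs ham
    _ ≤ ∫ t in a..m, Real.sign (x - t) * (G t - G x) :=
        intervalIntegral.integral_mono_on ham habsHI hsgnGGI hpt
end

section
/- Let X be a random variable taking values in [a,b] with probability density function f : [a,b] → [0,1] and cumulative distribution function F(x) = ∫_a^x f(t) dt. Then for all x ∈ [a,(a+b)/2], the quantity T(x) := (1/(b−a)) [ 2((3a+b)/4 − x)·(F(a+b−x) − F(x)) + ∫_a^{(a+b)/2} sgn(x−t)·(F(a+b−t) − F(t)) dt ] satisfies T(x) ≤ (1/(b−a)) [ 2((3a+b)/4 − x)·(F(a+b−x) − F(x)) + (x−a) ] ≤ 1/4 + |x − (3a+b)/4|/(b−a). -/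
open Set MeasureTheory

/-- Bounds on the quantity `T(x)` for cumulative distribution functions. -/
theorem cdf_refined_bound_chain (a b : ℝ) (hab : a < b) (f F : ℝ → ℝ)
    (hint : IntegrableOn f (Icc a b))
    (h0 : ∀ t ∈ Icc a b, 0 ≤ f t) (h1 : ∀ t ∈ Icc a b, f t ≤ 1)
    (hprob : (∫ t in a..b, f t) = 1)
    (hF : ∀ x ∈ Icc a b, F x = ∫ t in a..x, f t) :
    ∀ x ∈ Icc a ((a + b) / 2),
      (1 / (b - a)) * (2 * ((3 * a + b) / 4 - x) * (F (a + b - x) - F x)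
          + ∫ t in a..((a + b) / 2), Real.sign (x - t) * (F (a + b - t) - F t)) ≤
        (1 / (b - a)) * (2 * ((3 * a + b) / 4 - x) * (F (a + b - x) - F x) + (x - a)) ∧
      (1 / (b - a)) * (2 * ((3 * a + b) / 4 - x) * (F (a + b - x) - F x) + (x - a)) ≤
        1 / 4 + |x - (3 * a + b) / 4| / (b - a) := by
  intro x hx
  have hba : (0:ℝ) < b - a := by linarith
  set m : ℝ := (a + b) / 2 with hm
  have ham : a ≤ m := by simp only [hm]; linarith
  have hmb : m ≤ b := by simp only [hm]; linarith
  have hax : a ≤ x := hx.1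
  have hxm : x ≤ m := hx.2
  -- interval integrability of f on subintervals of [a,b]
  have hii : ∀ u v : ℝ, a ≤ u → u ≤ v → v ≤ b → IntervalIntegrable f volume u v := by
    intro u v h1' h2' h3'
    rw [intervalIntegrable_iff_integrableOn_Ioc_of_le h2']
    exact hint.mono_set (Ioc_subset_Icc_self.trans (Icc_subset_Icc h1' h3'))
  -- rewrite F differences as integrals
  have key : ∀ t ∈ Icc a m, F (a + b - t) - F t = ∫ s in t..(a + b - t), f s := by
    intro t ht
    have ht1 : t ∈ Icc a b := ⟨ht.1, ht.2.trans hmb⟩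
    have ht2 : a + b - t ∈ Icc a b := by
      have h1' := ht.1
      have h2' : t ≤ (a + b) / 2 := ht.2
      exact ⟨by linarith, by linarith⟩
    rw [hF _ ht2, hF _ ht1]
    exact intervalIntegral.integral_interval_sub_left
      (hii a (a + b - t) le_rfl ht2.1 ht2.2) (hii a t le_rfl ht1.1 ht1.2)
  -- 0 ≤ F(a+b-t) - F t ≤ 1 on [a,m]
  have hg0 : ∀ t ∈ Icc a m, 0 ≤ F (a + b - t) - F t := by
    intro t ht
    rw [key t ht]
    have h2' : t ≤ (a + b) / 2 := ht.2
    apply intervalIntegral.integral_nonneg (by linarith)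
    intro s hs
    exact h0 s ⟨ht.1.trans hs.1, by linarith [hs.2, ht.1]⟩
  have hg1 : ∀ t ∈ Icc a m, F (a + b - t) - F t ≤ 1 := by
    intro t ht
    have h1' := ht.1
    have h2' : t ≤ (a + b) / 2 := ht.2
    have hs1 : a ≤ a + b - t := by linarith
    have hs2 : a + b - t ≤ b := by linarith
    have htt : t ≤ a + b - t := by linarith
    rw [key t ht, ← hprob]
    have e1 : (∫ s in a..t, f s) + ∫ s in t..b, f s = ∫ s in a..b, f s :=
      intervalIntegral.integral_add_adjacent_intervals (hii a t le_rfl h1' (by linarith))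
        (hii t b h1' (by linarith) le_rfl)
    have e2 : (∫ s in t..(a + b - t), f s) + ∫ s in (a + b - t)..b, f s = ∫ s in t..b, f s :=
      intervalIntegral.integral_add_adjacent_intervals (hii t (a + b - t) h1' htt hs2)
        (hii (a + b - t) b hs1 hs2 le_rfl)
    have n1 : 0 ≤ ∫ s in a..t, f s := by
      apply intervalIntegral.integral_nonneg h1'
      exact fun s hs => h0 s ⟨hs.1, by linarith [hs.2]⟩
    have n2 : 0 ≤ ∫ s in (a + b - t)..b, f s := by
      apply intervalIntegral.integral_nonneg hs2
      exact fun s hs => h0 s ⟨by linarith [hs.1], hs.2⟩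
    linarith
  -- continuity of the primitive, hence integrability of g on [a,m]
  set P : ℝ → ℝ := fun u => ∫ s in a..u, f s with hP
  have hPc : ContinuousOn P (Icc a b) := by
    have := intervalIntegral.continuousOn_primitive_interval
      (μ := volume) (a := a) (b := b) (f := f) (by rwa [uIcc_of_le hab.le])
    rwa [uIcc_of_le hab.le] at this
  set g : ℝ → ℝ := fun t => P (a + b - t) - P t with hg
  have hgc : ContinuousOn g (Icc a m) := by
    apply ContinuousOn.sub
    · apply hPc.comp (Continuous.continuousOn (by continuity))
      intro t ht
      exact ⟨by linarith [ht.1, ht.2, hm ▸ ht.2], by linarith [ht.1]⟩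
    · exact hPc.mono (Icc_subset_Icc le_rfl hmb)
  have hgF : ∀ t ∈ Icc a m, F (a + b - t) - F t = g t := by
    intro t ht
    have ht1 : t ∈ Icc a b := ⟨ht.1, ht.2.trans hmb⟩
    have h2' : t ≤ (a + b) / 2 := ht.2
    have ht2 : a + b - t ∈ Icc a b := ⟨by linarith [ht.1], by linarith [ht.1]⟩
    simp only [hg, hP]
    rw [hF _ ht2, hF _ ht1]
  -- the integral identity: ∫ a..m sgn(x-t) * (F(a+b-t)-F t) = ∫ a..x g - ∫ x..m g
  have hgi1 : IntervalIntegrable g volume a x :=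
    (hgc.mono (Icc_subset_Icc le_rfl hxm)).intervalIntegrable_of_Icc hax
  have hgi2 : IntervalIntegrable g volume x m :=
    (hgc.mono (Icc_subset_Icc hax le_rfl)).intervalIntegrable_of_Icc hxm
  have heq1 : (∫ t in a..x, Real.sign (x - t) * (F (a + b - t) - F t)) = ∫ t in a..x, g t := by
    apply intervalIntegral.integral_congr_ae
    have hxnull : (volume : Measure ℝ) {x} = 0 := measure_singleton x
    filter_upwards [measure_eq_zero_iff_ae_notMem.mp hxnull] with t ht htmem
    rw [uIoc_of_le hax] at htmem
    have htx : t < x := lt_of_le_of_ne htmem.2 (by simpa using ht)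
    rw [Real.sign_of_pos (by linarith), one_mul,
      hgF t ⟨htmem.1.le, htx.le.trans hxm⟩]
  have heq2 : (∫ t in x..m, Real.sign (x - t) * (F (a + b - t) - F t)) = ∫ t in x..m, -g t := by
    apply intervalIntegral.integral_congr_ae
    have hxnull : (volume : Measure ℝ) {x} = 0 := measure_singleton x
    filter_upwards [measure_eq_zero_iff_ae_notMem.mp hxnull] with t ht htmem
    rw [uIoc_of_le hxm] at htmem
    have htx : x < t := htmem.1
    rw [Real.sign_of_neg (by linarith),
      hgF t ⟨hax.trans htx.le, htmem.2⟩]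
    ring
  have hsplit : (∫ t in a..m, Real.sign (x - t) * (F (a + b - t) - F t))
      = (∫ t in a..x, g t) - ∫ t in x..m, g t := by
    have hii1 : IntervalIntegrable (fun t => Real.sign (x - t) * (F (a + b - t) - F t))
        volume a x := by
      apply IntervalIntegrable.congr_ae hgi1
      have hxnull : (volume : Measure ℝ) {x} = 0 := measure_singleton x
      filter_upwards [ae_restrict_of_ae (measure_eq_zero_iff_ae_notMem.mp hxnull),
        ae_restrict_mem measurableSet_uIoc] with t ht htmem
      rw [uIoc_of_le hax] at htmem
      have htx : t < x := lt_of_le_of_ne htmem.2 (by simpa using ht)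
      rw [Real.sign_of_pos (by linarith), one_mul, hgF t ⟨htmem.1.le, htx.le.trans hxm⟩]
    have hii2 : IntervalIntegrable (fun t => Real.sign (x - t) * (F (a + b - t) - F t))
        volume x m := by
      apply IntervalIntegrable.congr_ae hgi2.neg
      have hxnull : (volume : Measure ℝ) {x} = 0 := measure_singleton x
      filter_upwards [ae_restrict_of_ae (measure_eq_zero_iff_ae_notMem.mp hxnull),
        ae_restrict_mem measurableSet_uIoc] with t ht htmem
      rw [uIoc_of_le hxm] at htmem
      have htx : x < t := htmem.1
      rw [Real.sign_of_neg (by linarith), hgF t ⟨hax.trans htx.le, htmem.2⟩]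
      simp [neg_mul]
    rw [← intervalIntegral.integral_add_adjacent_intervals hii1 hii2, heq1, heq2,
      intervalIntegral.integral_neg, sub_eq_add_neg]
  -- bound the integral by x - a
  have hbound : (∫ t in a..m, Real.sign (x - t) * (F (a + b - t) - F t)) ≤ x - a := by
    rw [hsplit]
    have b1 : (∫ t in a..x, g t) ≤ ∫ t in a..x, (1 : ℝ) := by
      apply intervalIntegral.integral_mono_on hax hgi1 intervalIntegrable_const
      intro t ht
      have ht' : t ∈ Icc a m := ⟨ht.1, ht.2.trans hxm⟩
      rw [← hgF t ht']
      exact hg1 t ht'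
    have b2 : (0:ℝ) ≤ ∫ t in x..m, g t := by
      apply intervalIntegral.integral_nonneg hxm
      intro t ht
      have ht' : t ∈ Icc a m := ⟨hax.trans ht.1, ht.2⟩
      rw [← hgF t ht']
      exact hg0 t ht'
    simp only [intervalIntegral.integral_const, smul_eq_mul, mul_one] at b1
    linarith
  constructor
  · apply mul_le_mul_of_nonneg_left _ (by positivity)
    exact (add_le_add_iff_left _).mpr hbound
  · -- second inequality
    have hGx0 : 0 ≤ F (a + b - x) - F x := hg0 x hx
    have hGx1 : F (a + b - x) - F x ≤ 1 := hg1 x hx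
    rw [one_div, inv_mul_eq_div, div_le_iff₀ hba]
    rcases le_total x ((3 * a + b) / 4) with hxc | hxc
    · rw [abs_of_nonpos (by linarith)]
      have h2 : 2 * ((3 * a + b) / 4 - x) * (F (a + b - x) - F x) ≤
          2 * ((3 * a + b) / 4 - x) * 1 :=
        mul_le_mul_of_nonneg_left hGx1 (by linarith)
      have hrw : ((1:ℝ)/4 + -(x - (3 * a + b) / 4)/(b-a))*(b-a)
          = (b-a)/4 + ((3*a+b)/4 - x) := by
        field_simp
        ring
      rw [hrw]
      linarith
    · rw [abs_of_nonneg (by linarith)]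
      have h2 : 2 * ((3 * a + b) / 4 - x) * (F (a + b - x) - F x) ≤ 0 :=
        mul_nonpos_of_nonpos_of_nonneg (by linarith) hGx0
      have hrw : ((1:ℝ)/4 + (x - (3 * a + b) / 4)/(b-a))*(b-a)
          = (b-a)/4 + (x - (3*a+b)/4) := by
        field_simp
      rw [hrw]
      linarith
end

section
/- Let X be a random variable taking values in [a,b] with probability density function f : [a,b] → [0,1] and cumulative distribution function F(x) = ∫_a^x f(t) dt, and let E(X) = ∫_a^b t f(t) dt. Then | ( F((3a+b)/4) + F((a+3b)/4) )/2 − (b − E(X))/(b−a) | ≤ (1/(b−a)) ∫_a^{(a+b)/2} sgn((3a+b)/4 − t)·(F(a+b−t) − F(t)) dt ≤ 1/4. -/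
open Set MeasureTheory

lemma fubini_primitive (a b : ℝ) (hab : a ≤ b) (f : ℝ → ℝ)
    (hint : IntegrableOn f (Icc a b)) :
    (∫ t in a..b, (∫ s in a..t, f s)) = ∫ s in a..b, (b - s) * f s := by
  have hIoc : IntegrableOn f (Ioc a b) := hint.mono_set Ioc_subset_Icc_self
  set μ := volume.restrict (Ioc a b) with hμ
  have hfin : IsFiniteMeasure μ := by
    constructor
    rw [hμ, Measure.restrict_apply_univ, Real.volume_Ioc]
    exact ENNReal.ofReal_lt_top
  set g : ℝ → ℝ → ℝ := fun s t => if s ≤ t then f s else 0 with hg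
  have hgint : Integrable (Function.uncurry g) (μ.prod μ) := by
    have huncurry : Function.uncurry g
        = Set.indicator {p : ℝ × ℝ | p.1 ≤ p.2} (fun p => f p.1) := by
      funext p
      by_cases h : p.1 ≤ p.2
      · simp [Function.uncurry, hg, h, Set.indicator, mem_setOf_eq]
      · simp [Function.uncurry, hg, h, Set.indicator, mem_setOf_eq]
    have hfprod : Integrable (fun p : ℝ × ℝ => f p.1) (μ.prod μ) := by
      have h1 := Integrable.mul_prod (μ := μ) (ν := μ) hIoc (integrable_const (1 : ℝ))
      simpa using h1
    rw [huncurry]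
    exact hfprod.indicator (measurableSet_le measurable_fst measurable_snd)
  have hswap := integral_integral_swap hgint
  have hL : (∫ s, (∫ t, g s t ∂μ) ∂μ) = ∫ s in a..b, (b - s) * f s := by
    rw [intervalIntegral.integral_of_le hab, hμ]
    refine setIntegral_congr_fun measurableSet_Ioc fun s hs => ?_
    have hfun : (fun t => g s t) = Set.indicator (Ici s) (fun _ => f s) := by
      funext t
      by_cases h : s ≤ t
      · simp [hg, h, Set.indicator, mem_Ici]
      · simp [hg, h, Set.indicator, mem_Ici]
    rw [hfun, setIntegral_indicator measurableSet_Ici]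
    have hset : Ioc a b ∩ Ici s = Icc s b :=
      Set.ext fun t => ⟨fun h => ⟨h.2, h.1.2⟩, fun h => ⟨⟨hs.1.trans_le h.1, h.2⟩, h.1⟩⟩
    rw [hset, setIntegral_const, Real.volume_real_Icc_of_le (by linarith [hs.2] : s ≤ b), smul_eq_mul]
  have hR : (∫ t, (∫ s, g s t ∂μ) ∂μ) = ∫ t in a..b, (∫ s in a..t, f s) := by
    rw [intervalIntegral.integral_of_le hab, hμ]
    refine setIntegral_congr_fun measurableSet_Ioc fun t ht => ?_
    have hfun : (fun s => g s t) = Set.indicator (Iic t) f := by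
      funext s
      by_cases h : s ≤ t
      · simp [hg, h, Set.indicator, mem_Iic]
      · simp [hg, h, Set.indicator, mem_Iic]
    rw [hfun, setIntegral_indicator measurableSet_Iic]
    have hset : Ioc a b ∩ Iic t = Ioc a t :=
      Set.ext fun s => ⟨fun h => ⟨h.1.1, h.2⟩, fun h => ⟨⟨h.1, h.2.trans ht.2⟩, h.2⟩⟩
    rw [hset, intervalIntegral.integral_of_le ht.1.le]
  rw [← hR, ← hswap, hL]



/-- Refined trapezoid type inequality for cumulative distribution functions. -/
theorem cdf_refined_trapezoid_type (a b : ℝ) (hab : a < b) (f F : ℝ → ℝ)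
    (hint : IntegrableOn f (Icc a b))
    (h0 : ∀ t ∈ Icc a b, 0 ≤ f t) (h1 : ∀ t ∈ Icc a b, f t ≤ 1)
    (hprob : (∫ t in a..b, f t) = 1)
    (hF : ∀ x ∈ Icc a b, F x = ∫ t in a..x, f t) :
    |(F ((3 * a + b) / 4) + F ((a + 3 * b) / 4)) / 2
        - (b - ∫ t in a..b, t * f t) / (b - a)| ≤
      (1 / (b - a)) * ∫ t in a..((a + b) / 2),
        Real.sign ((3 * a + b) / 4 - t) * (F (a + b - t) - F t) ∧
    (1 / (b - a)) * (∫ t in a..((a + b) / 2),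
        Real.sign ((3 * a + b) / 4 - t) * (F (a + b - t) - F t)) ≤
      1 / 4 := by
  have hba : (0:ℝ) < b - a := by linarith
  set m : ℝ := (a + b) / 2 with hm
  set q1 : ℝ := (3 * a + b) / 4 with hq1
  set q3 : ℝ := (a + 3 * b) / 4 with hq3
  have haq1 : a < q1 := by rw [hq1]; linarith
  have hq1m : q1 < m := by rw [hq1, hm]; linarith
  have hmq3 : m < q3 := by rw [hm, hq3]; linarith
  have hq3b : q3 < b := by rw [hq3]; linarith
  have hreflq1 : a + b - q1 = q3 := by rw [hq1, hq3]; ring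
  have hq1a : q1 - a = (b - a) / 4 := by rw [hq1]; ring
  have hmq1 : m - q1 = (b - a) / 4 := by rw [hq1, hm]; ring
  have hamem : a ∈ Icc a b := ⟨le_rfl, hab.le⟩
  have hbmem : b ∈ Icc a b := ⟨hab.le, le_rfl⟩
  have hq1mem : q1 ∈ Icc a b := ⟨haq1.le, by linarith⟩
  have hmmem : m ∈ Icc a b := ⟨by linarith, by linarith⟩
  have hq3mem : q3 ∈ Icc a b := ⟨by linarith, hq3b.le⟩
  have hreflmem : ∀ t ∈ Icc a b, a + b - t ∈ Icc a b := fun t ht =>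
    ⟨by linarith [ht.2], by linarith [ht.1]⟩
  have hsub : ∀ x y : ℝ, x ∈ Icc a b → y ∈ Icc a b → uIcc x y ⊆ Icc a b := by
    intro x y hx hy
    rw [← uIcc_of_le hab.le]
    exact uIcc_subset_uIcc (by rwa [uIcc_of_le hab.le]) (by rwa [uIcc_of_le hab.le])
  have hfii : ∀ x y : ℝ, x ∈ Icc a b → y ∈ Icc a b → IntervalIntegrable f volume x y :=
    fun x y hx hy => (hint.mono_set (hsub x y hx hy)).intervalIntegrable
  set φ : ℝ → ℝ := fun x => ∫ t in a..x, f t with hφdef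
  have hφcont : ContinuousOn φ (Icc a b) := by
    have h := intervalIntegral.continuousOn_primitive_interval
      (μ := volume) (a := a) (b := b) (f := f) (by rwa [uIcc_of_le hab.le])
    rwa [uIcc_of_le hab.le] at h
  have hφdiff : ∀ x ∈ Icc a b, ∀ y ∈ Icc a b, φ y - φ x = ∫ t in x..y, f t :=
    fun x hx y hy => intervalIntegral.integral_interval_sub_left
      (hfii a y hamem hy) (hfii a x hamem hx)
  have hmono : ∀ x ∈ Icc a b, ∀ y ∈ Icc a b, x ≤ y → φ x ≤ φ y := by
    intro x hx y hy hxy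
    have h2 : 0 ≤ ∫ t in x..y, f t :=
      intervalIntegral.integral_nonneg hxy
        (fun u hu => h0 u ⟨hx.1.trans hu.1, hu.2.trans hy.2⟩)
    have := hφdiff x hx y hy
    linarith
  have hφa : φ a = 0 := intervalIntegral.integral_same
  have hφb : φ b = 1 := hprob
  have hφ0 : ∀ x ∈ Icc a b, 0 ≤ φ x := fun x hx => hφa ▸ hmono a hamem x hx hx.1
  have hφ1 : ∀ x ∈ Icc a b, φ x ≤ 1 := fun x hx => hφb ▸ hmono x hx b hbmem hx.2
  -- continuity of reflected primitive
  have hrcont : ContinuousOn (fun t => φ (a + b - t)) (Icc a b) := by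
    apply hφcont.comp ((continuous_const.sub continuous_id).continuousOn)
    intro t ht
    exact hreflmem t ht
  have hφii : ∀ x y : ℝ, x ∈ Icc a b → y ∈ Icc a b → IntervalIntegrable φ volume x y :=
    fun x y hx hy => (hφcont.mono (hsub x y hx hy)).intervalIntegrable
  have hrii : ∀ x y : ℝ, x ∈ Icc a b → y ∈ Icc a b →
      IntervalIntegrable (fun t => φ (a + b - t)) volume x y :=
    fun x y hx hy => (hrcont.mono (hsub x y hx hy)).intervalIntegrable
  -- E identity
  have hE : b - (∫ t in a..b, t * f t) = ∫ t in a..b, φ t := by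
    have h1 := fubini_primitive a b hab.le f hint
    have hfi : IntervalIntegrable f volume a b := hfii a b hamem hbmem
    have htf : IntervalIntegrable (fun t => t * f t) volume a b :=
      hfi.continuousOn_mul continuousOn_id
    have hbf : IntervalIntegrable (fun t => b * f t) volume a b :=
      hfi.continuousOn_mul continuousOn_const
    have h2 : (∫ s in a..b, (b - s) * f s)
        = (∫ s in a..b, b * f s) - ∫ s in a..b, s * f s := by
      rw [← intervalIntegral.integral_sub hbf htf]
      congr 1
      funext s
      ring
    rw [h1, h2, intervalIntegral.integral_const_mul, hprob]
    ring
  -- reflection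
  have hrefl : (∫ t in a..m, φ (a + b - t)) = ∫ t in m..b, φ t := by
    have e1 : a + b - m = m := by rw [hm]; ring
    have e2 : a + b - a = b := by ring
    rw [intervalIntegral.integral_comp_sub_left φ (a + b), e1, e2]
  have hsplitφ : ∫ t in a..b, φ t = (∫ t in a..m, φ t) + ∫ t in m..b, φ t :=
    (intervalIntegral.integral_add_adjacent_intervals
      (hφii a m hamem hmmem) (hφii m b hmmem hbmem)).symm
  -- the four pieces
  set A1 : ℝ := ∫ t in a..q1, φ t with hA1
  set A2 : ℝ := ∫ t in q1..m, φ t with hA2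
  set B1 : ℝ := ∫ t in a..q1, φ (a + b - t) with hB1
  set B2 : ℝ := ∫ t in q1..m, φ (a + b - t) with hB2
  have hsplitA : (∫ t in a..m, φ t) = A1 + A2 :=
    (intervalIntegral.integral_add_adjacent_intervals
      (hφii a q1 hamem hq1mem) (hφii q1 m hq1mem hmmem)).symm
  have hsplitB : (∫ t in a..m, φ (a + b - t)) = B1 + B2 :=
    (intervalIntegral.integral_add_adjacent_intervals
      (hrii a q1 hamem hq1mem) (hrii q1 m hq1mem hmmem)).symm
  have hEsum : b - (∫ t in a..b, t * f t) = A1 + A2 + B1 + B2 := by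
    rw [hE, hsplitφ, ← hrefl, hsplitA, hsplitB]
    ring
  -- rewrite the sign integral
  have hRcongr : (∫ t in a..m, Real.sign (q1 - t) * (F (a + b - t) - F t))
      = ∫ t in a..m, Real.sign (q1 - t) * (φ (a + b - t) - φ t) := by
    apply intervalIntegral.integral_congr
    intro t ht
    rw [uIcc_of_le (by linarith : a ≤ m)] at ht
    have ht1 : t ∈ Icc a b := ⟨ht.1, by linarith [ht.2]⟩
    show Real.sign (q1 - t) * (F (a + b - t) - F t)
        = Real.sign (q1 - t) * (φ (a + b - t) - φ t)
    rw [hF t ht1, hF _ (hreflmem t ht1)]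
  have hsignmeas : Measurable fun t : ℝ => Real.sign (q1 - t) := by
    have h : Measurable Real.sign := by
      unfold Real.sign
      exact Measurable.ite measurableSet_Iio measurable_const
        (Measurable.ite measurableSet_Ioi measurable_const measurable_const)
    exact h.comp (measurable_const.sub measurable_id)
  have hsignbd : ∀ t : ℝ, ‖Real.sign (q1 - t)‖ ≤ 1 := by
    intro t
    rcases Real.sign_apply_eq (q1 - t) with h | h | h <;> rw [h] <;> norm_num
  have hsgnii : ∀ x y : ℝ, x ∈ Icc a b → y ∈ Icc a b →
      IntervalIntegrable (fun t => Real.sign (q1 - t) * (φ (a + b - t) - φ t)) volume x y := by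
    intro x y hx hy
    have hG : IntervalIntegrable (fun t => φ (a + b - t) - φ t) volume x y :=
      (hrii x y hx hy).sub (hφii x y hx hy)
    constructor
    · exact hG.1.bdd_mul hsignmeas.aestronglyMeasurable (ae_of_all _ hsignbd)
    · exact hG.2.bdd_mul hsignmeas.aestronglyMeasurable (ae_of_all _ hsignbd)
  have hsplitR : (∫ t in a..m, Real.sign (q1 - t) * (φ (a + b - t) - φ t))
      = (∫ t in a..q1, Real.sign (q1 - t) * (φ (a + b - t) - φ t))
        + ∫ t in q1..m, Real.sign (q1 - t) * (φ (a + b - t) - φ t) :=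
    (intervalIntegral.integral_add_adjacent_intervals
      (hsgnii a q1 hamem hq1mem) (hsgnii q1 m hq1mem hmmem)).symm
  have hR1 : (∫ t in a..q1, Real.sign (q1 - t) * (φ (a + b - t) - φ t))
      = B1 - A1 := by
    rw [hB1, hA1, ← intervalIntegral.integral_sub (hrii a q1 hamem hq1mem)
      (hφii a q1 hamem hq1mem)]
    apply intervalIntegral.integral_congr_ae
    have hne : ∀ᵐ t : ℝ, t ≠ q1 := by
      rw [ae_iff]
      simp only [ne_eq, not_not, setOf_eq_eq_singleton]
      exact measure_singleton q1
    filter_upwards [hne] with t htne ht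
    rw [uIoc_of_le haq1.le] at ht
    have hlt : t < q1 := lt_of_le_of_ne ht.2 htne
    show Real.sign (q1 - t) * (φ (a + b - t) - φ t) = φ (a + b - t) - φ t
    rw [Real.sign_of_pos (by linarith), one_mul]
  have hR2 : (∫ t in q1..m, Real.sign (q1 - t) * (φ (a + b - t) - φ t))
      = -(B2 - A2) := by
    rw [hB2, hA2, ← intervalIntegral.integral_sub (hrii q1 m hq1mem hmmem)
      (hφii q1 m hq1mem hmmem), ← intervalIntegral.integral_neg]
    apply intervalIntegral.integral_congr_ae
    filter_upwards with t ht
    rw [uIoc_of_le hq1m.le] at ht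
    show Real.sign (q1 - t) * (φ (a + b - t) - φ t) = -(φ (a + b - t) - φ t)
    rw [Real.sign_of_neg (by linarith [ht.1])]
    ring
  have hRval : (∫ t in a..m, Real.sign (q1 - t) * (F (a + b - t) - F t))
      = (B1 - A1) - (B2 - A2) := by
    rw [hRcongr, hsplitR, hR1, hR2]
    ring
  -- estimates
  have hconst : ∀ x y c : ℝ, (∫ _ in x..y, c) = (y - x) * c := by
    intro x y c
    rw [intervalIntegral.integral_const, smul_eq_mul]
  have est1 : (b - a) / 4 * φ q3 ≤ B1 := by
    have h := intervalIntegral.integral_mono_on haq1.le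
      (intervalIntegrable_const (c := φ q3)) (hrii a q1 hamem hq1mem)
      (fun t ht => by
        have htm : t ∈ Icc a b := ⟨ht.1, by linarith [ht.2]⟩
        refine hmono q3 hq3mem _ (hreflmem t htm) ?_
        rw [← hreflq1]
        linarith [ht.2])
    rw [hconst] at h
    calc (b - a) / 4 * φ q3 = (q1 - a) * φ q3 := by rw [hq1a]
      _ ≤ B1 := h
  have est2 : (b - a) / 4 * φ q1 ≤ A2 := by
    have h := intervalIntegral.integral_mono_on hq1m.le
      (intervalIntegrable_const (c := φ q1)) (hφii q1 m hq1mem hmmem)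
      (fun t ht => hmono q1 hq1mem t ⟨by linarith [ht.1], by linarith [ht.2]⟩ ht.1)
    rw [hconst] at h
    calc (b - a) / 4 * φ q1 = (m - q1) * φ q1 := by rw [hmq1]
      _ ≤ A2 := h
  have est3 : A1 ≤ (b - a) / 4 * φ q1 := by
    have h := intervalIntegral.integral_mono_on haq1.le
      (hφii a q1 hamem hq1mem) (intervalIntegrable_const (c := φ q1))
      (fun t ht => hmono t ⟨ht.1, by linarith [ht.2]⟩ q1 hq1mem ht.2)
    rw [hconst] at h
    calc A1 ≤ (q1 - a) * φ q1 := h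
      _ = (b - a) / 4 * φ q1 := by rw [hq1a]
  have est4 : B2 ≤ (b - a) / 4 * φ q3 := by
    have h := intervalIntegral.integral_mono_on hq1m.le
      (hrii q1 m hq1mem hmmem) (intervalIntegrable_const (c := φ q3))
      (fun t ht => by
        have htm : t ∈ Icc a b := ⟨by linarith [ht.1], by linarith [ht.2]⟩
        refine hmono _ (hreflmem t htm) q3 hq3mem ?_
        rw [← hreflq1]
        linarith [ht.1])
    rw [hconst] at h
    calc B2 ≤ (m - q1) * φ q3 := h
      _ = (b - a) / 4 * φ q3 := by rw [hmq1]
  have est5 : B1 - A1 ≤ (b - a) / 4 := by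
    have h := intervalIntegral.integral_mono_on haq1.le
      ((hrii a q1 hamem hq1mem).sub (hφii a q1 hamem hq1mem))
      (intervalIntegrable_const (c := (1:ℝ)))
      (fun t ht => by
        have htm : t ∈ Icc a b := ⟨ht.1, by linarith [ht.2]⟩
        have h1' := hφ1 _ (hreflmem t htm)
        have h0' := hφ0 t htm
        show φ (a + b - t) - φ t ≤ 1
        linarith)
    rw [hconst] at h
    have h2 : B1 - A1 = ∫ t in a..q1, (φ (a + b - t) - φ t) := by
      rw [hB1, hA1, ← intervalIntegral.integral_sub (hrii a q1 hamem hq1mem)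
        (hφii a q1 hamem hq1mem)]
    rw [h2]
    calc (∫ t in a..q1, (φ (a + b - t) - φ t)) ≤ (q1 - a) * 1 := h
      _ = (b - a) / 4 := by rw [hq1a]; ring
  have est6 : 0 ≤ B2 - A2 := by
    have h2 : B2 - A2 = ∫ t in q1..m, (φ (a + b - t) - φ t) := by
      rw [hB2, hA2, ← intervalIntegral.integral_sub (hrii q1 m hq1mem hmmem)
        (hφii q1 m hq1mem hmmem)]
    rw [h2]
    apply intervalIntegral.integral_nonneg hq1m.le
    intro t ht
    have htm : t ∈ Icc a b := ⟨by linarith [ht.1], by linarith [ht.2]⟩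
    have : t ≤ a + b - t := by
      have : t ≤ m := ht.2
      rw [hm] at this
      linarith
    have := hmono t htm _ (hreflmem t htm) this
    show 0 ≤ φ (a + b - t) - φ t
    linarith
  -- assemble
  have hφq1 : F q1 = φ q1 := hF q1 hq1mem
  have hφq3 : F q3 = φ q3 := hF q3 hq3mem
  set R : ℝ := (B1 - A1) - (B2 - A2) with hRdef
  have hphi0q1 := hφ0 q1 hq1mem
  have hphi0q3 := hφ0 q3 hq3mem
  constructor
  · rw [hRval, hφq1, hφq3, hEsum]
    have hD : (φ q1 + φ q3) / 2 - (A1 + A2 + B1 + B2) / (b - a)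
        = ((b - a) / 2 * (φ q1 + φ q3) - (A1 + A2 + B1 + B2)) / (b - a) := by
      field_simp
    rw [hD, abs_div, abs_of_pos hba, one_div, inv_mul_eq_div]
    refine (div_le_div_iff_of_pos_right hba).mpr ?_
    rw [abs_le]
    constructor
    · linarith
    · linarith
  · rw [hRval]
    have hle : (B1 - A1) - (B2 - A2) ≤ (b - a) / 4 := by linarith
    calc (1 / (b - a)) * ((B1 - A1) - (B2 - A2))
        ≤ (1 / (b - a)) * ((b - a) / 4) := by
          apply mul_le_mul_of_nonneg_left hle
          positivity
      _ = 1 / 4 := by field_simp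
end
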